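/- arXiv:0908.4076 — 5 statements merged into one kernel-verified Lean document; each statement's English description precedes it below -/
import Mathlib

section
/- Fix integers k ≥ 2 and j ≥ 1, and a set Υ ⊆ C_k≀S_j such that red(u) = u for every (τ,u) ∈ Υ. For n ≥ 0 let A_n = Σ q^{inv(σ)} p^{coinv(σ)} r^{||w||}, summed over all (σ,w) ∈ C_k≀S_n having no Υ-bi-match, and for n ≥ 1 let B_n = Σ of the same weight over all (σ,w) ∈ C_k≀S_n having exactly one Υ-bi-match, which starts at position n−j+1. Then for every n ≥ 1, [k]_r · [n]_{p,q} · A_{n−1} = A_n + B_n. Equivalently, B(t) = ([k]_r t − 1)·A(t) + 1, where A(t) = Σ_{n≥0} A_n t^n/[n]_{p,q}! and B(t) = Σ_{n≥1} B_n t^n/[n]_{p,q}!. -/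
open Finset
open scoped Classical

noncomputable section

/-- The field of rational functions in `p, q, r, x` over `ℚ`. -/
abbrev K : Type := FractionRing (MvPolynomial (Fin 4) ℚ)

def pv : K := algebraMap (MvPolynomial (Fin 4) ℚ) K (MvPolynomial.X 0)
def qv : K := algebraMap (MvPolynomial (Fin 4) ℚ) K (MvPolynomial.X 1)
def rv : K := algebraMap (MvPolynomial (Fin 4) ℚ) K (MvPolynomial.X 2)
def xv : K := algebraMap (MvPolynomial (Fin 4) ℚ) K (MvPolynomial.X 3)

/-- The `p,q`-analogue `[m]_{p,q} = p^{m-1} + p^{m-2} q + ⋯ + q^{m-1}`. -/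
def pqInt (p q : K) (m : ℕ) : K := ∑ i ∈ Finset.range m, p ^ (m - 1 - i) * q ^ i

/-- The `p,q`-factorial `[m]_{p,q}!`. -/
def pqFac (p q : K) (m : ℕ) : K := ∏ i ∈ Finset.range m, pqInt p q (i + 1)

/-- The `p,q`-binomial coefficient `[n choose m]_{p,q}`. -/
def pqBinom (p q : K) (n m : ℕ) : K :=
  if m ≤ n then pqFac p q n / (pqFac p q m * pqFac p q (n - m)) else 0

/-- The number of inversions of a permutation of `{1, …, n}`. -/
def inv' {n : ℕ} (σ : Equiv.Perm (Fin n)) : ℕ :=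
  ((Finset.univ : Finset (Fin n × Fin n)).filter
    (fun p => p.1 < p.2 ∧ σ p.2 < σ p.1)).card

/-- The number of coinversions of a permutation of `{1, …, n}`. -/
def coinv' {n : ℕ} (σ : Equiv.Perm (Fin n)) : ℕ :=
  ((Finset.univ : Finset (Fin n × Fin n)).filter
    (fun p => p.1 < p.2 ∧ σ p.1 < σ p.2)).card

/-- `‖w‖ = w_1 + ⋯ + w_n` for a word `w ∈ {0, …, k-1}^n`. -/
def wsum {n k : ℕ} (w : Fin n → Fin k) : ℕ := ∑ i, (w i : ℕ)

/-- `redCount u a` is the value at position `a` of the reduction `red u` of the word `u`: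
the number of distinct letter values of `u` that are smaller than `u a`. -/
def redCount {j k : ℕ} (u : Fin j → Fin k) (a : Fin j) : ℕ :=
  ((Finset.univ : Finset (Fin k)).filter (fun c => c < u a ∧ ∃ b, u b = c)).card

/-- `(σ,w) ∈ C_k≀S_n` has a `Υ`-bi-match starting at (0-indexed) position `i`:
for some `(τ,u) ∈ Υ`, `red (σ_i … σ_{i+j-1}) = τ` and `red (w_i … w_{i+j-1}) = u`. -/
def biMatchAt {n : ℕ} (j k : ℕ) (Υ : Set (Equiv.Perm (Fin j) × (Fin j → Fin k)))
    (σ : Equiv.Perm (Fin n)) (w : Fin n → Fin k) (i : ℕ) : Prop :=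
  ∃ h : i + j ≤ n, ∃ τu ∈ Υ,
    (∀ a : Fin j,
      (((Finset.univ : Finset (Fin j)).filter (fun b : Fin j =>
        σ ⟨i + (b : ℕ), by have := b.isLt; omega⟩ <
          σ ⟨i + (a : ℕ), by have := a.isLt; omega⟩)).card) = (τu.1 a : ℕ)) ∧
    (∀ a : Fin j,
      redCount (fun b : Fin j => w ⟨i + (b : ℕ), by have := b.isLt; omega⟩) a = (τu.2 a : ℕ))

/-- `A_n`: the weighted count of `(σ,w) ∈ C_k≀S_n` with no `Υ`-bi-match. -/
def AΥ (j k : ℕ) (Υ : Set (Equiv.Perm (Fin j) × (Fin j → Fin k))) (n : ℕ) : K :=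
  ∑ σ : Equiv.Perm (Fin n), ∑ w : Fin n → Fin k,
    if (∀ i : ℕ, ¬ biMatchAt j k Υ σ w i) then
      qv ^ inv' σ * pv ^ coinv' σ * rv ^ wsum w else 0

/-- `B_n`: the weighted count of `(σ,w) ∈ C_k≀S_n` having exactly one `Υ`-bi-match,
which starts at (1-indexed) position `n - j + 1`. -/
def BΥ (j k : ℕ) (Υ : Set (Equiv.Perm (Fin j) × (Fin j → Fin k))) (n : ℕ) : K :=
  ∑ σ : Equiv.Perm (Fin n), ∑ w : Fin n → Fin k,
    if (biMatchAt j k Υ σ w (n - j) ∧ ∀ i : ℕ, biMatchAt j k Υ σ w i → i = n - j) then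
      qv ^ inv' σ * pv ^ coinv' σ * rv ^ wsum w else 0

/-!
Split off the last entry of `(σ, w) ∈ C_k ≀ S_{n+1}`: writing `σ_{n+1} = v + 1` and
`w_{n+1} = c`, the remaining entries reduce to some `(σ', w') ∈ C_k ≀ S_n`, and
`(σ', w', v, c)` ranges over all quadruples exactly once. The last entry adds `n - v`
inversions, `v` coinversions and `c` to `‖w‖`, so summing over `v` and `c` produces the
factor `[n+1]_{p,q} [k]_r`. A bi-match of `(σ, w)` not already present in `(σ', w')` must
contain the last position, so it starts at `n + 2 - j`; hence `(σ, w)` is counted by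
`A_{n+1} + B_{n+1}` exactly when `(σ', w')` is counted by `A_n`. Dividing the recurrence by
`[n+1]_{p,q}!` gives the generating-function identity.
-/

namespace Equiv.Perm

/-- `σ.insertLast v` sends the last position to `v` and position `i < n` to the `σ i`-th
element of `Fin (n + 1) \ {v}`. -/
def insertLast {n : ℕ} (σ : Perm (Fin n)) (v : Fin (n + 1)) : Perm (Fin (n + 1)) :=
  ((finSuccEquiv' (Fin.last n)).trans (optionCongr σ)).trans (finSuccEquiv' v).symm

variable {n : ℕ}

@[simp]
lemma insertLast_last (σ : Perm (Fin n)) (v : Fin (n + 1)) : σ.insertLast v (Fin.last n) = v := by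
  simp [insertLast]

@[simp]
lemma insertLast_castSucc (σ : Perm (Fin n)) (v : Fin (n + 1)) (i : Fin n) :
    σ.insertLast v i.castSucc = v.succAbove (σ i) := by
  simp [insertLast, finSuccEquiv'_last_apply_castSucc]

lemma bijective_insertLast :
    Function.Bijective fun x : Perm (Fin n) × Fin (n + 1) => x.1.insertLast x.2 := by
  refine (Fintype.bijective_iff_injective_and_card _).2 ⟨?_, ?_⟩
  · rintro ⟨σ, v⟩ ⟨τ, u⟩ h
    have hv : v = u := by simpa using congr($h (Fin.last n))
    subst hv
    have hστ : σ = τ := Equiv.ext fun i => by simpa using congr($h i.castSucc)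
    rw [hστ]
  · simp [Fintype.card_perm, Nat.factorial_succ, mul_comm]

lemma card_filter_comp {α : Type*} [Fintype α] (σ : Perm α) (p : α → Prop)
    [DecidablePred p] :
    #{x | p (σ x)} = #{x | p x} := by
  simpa only [card_filter] using Equiv.sum_comp σ (fun y => if p y then 1 else 0)

end Equiv.Perm

open Equiv.Perm

lemma Fin.card_filter_lt_and_castSucc_add_last {n : ℕ} (P : Fin (n + 1) → Fin (n + 1) → Prop)
    [DecidableRel P] :
    #{x : Fin (n + 1) × Fin (n + 1) | x.1 < x.2 ∧ P x.1 x.2}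
      = #{x : Fin n × Fin n | x.1 < x.2 ∧ P x.1.castSucc x.2.castSucc}
        + #{a : Fin n | P a.castSucc (Fin.last n)} := by
  simp only [card_filter, Fintype.sum_prod_type, Fin.sum_univ_castSucc,
    Fin.castSucc_lt_castSucc_iff, sum_add_distrib, Fin.castSucc_lt_last, lt_irrefl]
  simp [(Fin.castSucc_lt_last _).not_gt]

lemma inv'_insertLast {n : ℕ} (σ : Equiv.Perm (Fin n)) (v : Fin (n + 1)) :
    inv' (σ.insertLast v) = inv' σ + (n - v) := by
  rw [inv', Fin.card_filter_lt_and_castSucc_add_last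
    (fun a b => σ.insertLast v b < σ.insertLast v a)]
  simp only [insertLast_castSucc, insertLast_last, Fin.succAbove_lt_succAbove_iff,
    Fin.lt_succAbove_iff_le_castSucc]
  congr 1
  rw [σ.card_filter_comp (fun y => v ≤ y.castSucc)]
  simp only [← not_lt, Fin.lt_def, Fin.val_castSucc, filter_not, card_univ_sdiff,
    Fin.card_filter_val_lt, Fintype.card_fin]
  omega

lemma coinv'_insertLast {n : ℕ} (σ : Equiv.Perm (Fin n)) (v : Fin (n + 1)) :
    coinv' (σ.insertLast v) = coinv' σ + v := by
  rw [coinv', Fin.card_filter_lt_and_castSucc_add_last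
    (fun a b => σ.insertLast v a < σ.insertLast v b)]
  simp only [insertLast_castSucc, insertLast_last, Fin.succAbove_lt_succAbove_iff,
    Fin.succAbove_lt_iff_castSucc_lt]
  congr 1
  rw [σ.card_filter_comp (fun y => y.castSucc < v)]
  simp only [Fin.lt_def, Fin.val_castSucc, Fin.card_filter_val_lt]
  omega

lemma wsum_snoc {n k : ℕ} (w : Fin n → Fin k) (c : Fin k) :
    wsum (Fin.snoc w c : Fin (n + 1) → Fin k) = wsum w + c := by
  simp [wsum, Fin.sum_univ_castSucc]

section BiMatch

variable {n j k : ℕ} {Υ : Set (Equiv.Perm (Fin j) × (Fin j → Fin k))}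

lemma biMatchAt_insertLast_snoc_iff (σ : Equiv.Perm (Fin n)) (v : Fin (n + 1))
    (w : Fin n → Fin k) (c : Fin k) {i : ℕ} (hi : i + j ≤ n) :
    biMatchAt j k Υ (σ.insertLast v) (Fin.snoc w c) i ↔ biMatchAt j k Υ σ w i := by
  have hlt (b : Fin j) : i + b < n := by omega
  have hcast (b : Fin j) :
      (⟨i + b, by omega⟩ : Fin (n + 1)) = Fin.castSucc ⟨i + b, hlt b⟩ := rfl
  simp only [biMatchAt, hcast, insertLast_castSucc, Fin.succAbove_lt_succAbove_iff,
    Fin.snoc_castSucc]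
  exact ⟨fun ⟨_, h⟩ => ⟨hi, h⟩, fun ⟨_, h⟩ => ⟨by omega, h⟩⟩

lemma forall_not_biMatchAt_iff_insertLast_snoc (σ : Equiv.Perm (Fin n)) (v : Fin (n + 1))
    (w : Fin n → Fin k) (c : Fin k) :
    (∀ i, ¬ biMatchAt j k Υ σ w i) ↔
      (∀ i, ¬ biMatchAt j k Υ (σ.insertLast v) (Fin.snoc w c) i) ∨
      (biMatchAt j k Υ (σ.insertLast v) (Fin.snoc w c) (n + 1 - j) ∧
        ∀ i, biMatchAt j k Υ (σ.insertLast v) (Fin.snoc w c) i → i = n + 1 - j) := by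
  have hrestrict {i : ℕ} (hi : i + j ≤ n) :=
    biMatchAt_insertLast_snoc_iff (Υ := Υ) σ v w c hi
  constructor
  · intro hnone
    by_cases hlast : biMatchAt j k Υ (σ.insertLast v) (Fin.snoc w c) (n + 1 - j)
    · refine .inr ⟨hlast, fun i hi => ?_⟩
      by_contra hne
      exact hnone i ((hrestrict (by have := hi.fst; omega)).1 hi)
    · refine .inl fun i hi => ?_
      rcases eq_or_ne i (n + 1 - j) with rfl | hne
      · exact hlast hi
      · exact hnone i ((hrestrict (by have := hi.fst; omega)).1 hi)
  · rintro h i hi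
    have hext := (hrestrict hi.fst).2 hi
    rcases h with h | ⟨-, h⟩
    · exact h i hext
    · have := h i hext
      have := hi.fst
      omega

end BiMatch

def pqrWeight {n k : ℕ} (σ : Equiv.Perm (Fin n)) (w : Fin n → Fin k) : K :=
  qv ^ inv' σ * pv ^ coinv' σ * rv ^ wsum w

lemma pqrWeight_insertLast_snoc {n k : ℕ} (σ : Equiv.Perm (Fin n)) (v : Fin (n + 1))
    (w : Fin n → Fin k) (c : Fin k) :
    pqrWeight (σ.insertLast v) (Fin.snoc w c : Fin (n + 1) → Fin k)
      = pqrWeight σ w * (qv ^ (n - v) * pv ^ (v : ℕ)) * rv ^ (c : ℕ) := by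
  simp only [pqrWeight, inv'_insertLast, coinv'_insertLast, wsum_snoc, pow_add]
  ring

lemma sum_pow_mul_pow_eq_pqInt (p q : K) (m : ℕ) :
    ∑ v : Fin (m + 1), q ^ (m - v) * p ^ (v : ℕ) = pqInt p q (m + 1) := by
  rw [Fin.sum_univ_eq_sum_range (fun i => q ^ (m - i) * p ^ i), pqInt, ← sum_range_reflect]
  refine sum_congr rfl fun i hi => ?_
  rw [mem_range] at hi
  rw [show m - (m + 1 - 1 - i) = i by omega, show m + 1 - 1 - i = m - i by omega, mul_comm]

section Recurrence

variable (j k : ℕ) (Υ : Set (Equiv.Perm (Fin j) × (Fin j → Fin k)))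

lemma AΥ_eq_sum_pqrWeight (n : ℕ) :
    AΥ j k Υ n = ∑ σ : Equiv.Perm (Fin n), ∑ w : Fin n → Fin k,
      if ∀ i, ¬ biMatchAt j k Υ σ w i then pqrWeight σ w else 0 := rfl

lemma AΥ_add_BΥ (n : ℕ) :
    AΥ j k Υ n + BΥ j k Υ n = ∑ σ : Equiv.Perm (Fin n), ∑ w : Fin n → Fin k,
      if (∀ i, ¬ biMatchAt j k Υ σ w i) ∨
          (biMatchAt j k Υ σ w (n - j) ∧ ∀ i, biMatchAt j k Υ σ w i → i = n - j)
        then pqrWeight σ w else 0 := by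
  simp only [AΥ, BΥ, ← sum_add_distrib]
  refine sum_congr rfl fun σ _ => sum_congr rfl fun w _ => ?_
  by_cases hnone : ∀ i, ¬ biMatchAt j k Υ σ w i
  · simp [hnone, pqrWeight]
  · simp only [hnone, false_or, if_false, zero_add]
    rfl

lemma AΥ_succ_add_BΥ_succ (m : ℕ) :
    AΥ j k Υ (m + 1) + BΥ j k Υ (m + 1)
      = (∑ i ∈ range k, rv ^ i) * pqInt pv qv (m + 1) * AΥ j k Υ m := by
  have hsplit (σ : Equiv.Perm (Fin m)) (v : Fin (m + 1)) (c : Fin k) (w : Fin m → Fin k) :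
      (if (∀ i, ¬ biMatchAt j k Υ (σ.insertLast v) (Fin.snoc w c) i) ∨
          (biMatchAt j k Υ (σ.insertLast v) (Fin.snoc w c) (m + 1 - j) ∧
            ∀ i, biMatchAt j k Υ (σ.insertLast v) (Fin.snoc w c) i → i = m + 1 - j)
        then pqrWeight (σ.insertLast v) (Fin.snoc w c : Fin (m + 1) → Fin k) else 0)
        = (if ∀ i, ¬ biMatchAt j k Υ σ w i then pqrWeight σ w else 0)
          * (qv ^ (m - v) * pv ^ (v : ℕ)) * rv ^ (c : ℕ) := by
    simp only [← forall_not_biMatchAt_iff_insertLast_snoc, pqrWeight_insertLast_snoc]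
    split_ifs <;> ring
  have hsnoc (c : Fin k) (w : Fin m → Fin k) :
      Fin.snocEquiv (fun _ => Fin k) (c, w) = Fin.snoc w c := rfl
  rw [AΥ_add_BΥ, ← (Equiv.ofBijective _ bijective_insertLast).sum_comp]
  simp only [← (Fin.snocEquiv fun _ => Fin k).sum_comp, Fintype.sum_prod_type,
    Equiv.ofBijective_apply, hsnoc, hsplit, ← sum_mul, ← mul_sum]
  rw [← AΥ_eq_sum_pqrWeight, sum_pow_mul_pow_eq_pqInt, Fin.sum_univ_eq_sum_range (rv ^ ·)]
  ring

lemma AΥ_zero (hj : 1 ≤ j) : AΥ j k Υ 0 = 1 := by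
  have hnone (σ : Equiv.Perm (Fin 0)) (w : Fin 0 → Fin k) (i : ℕ) :
      ¬ biMatchAt j k Υ σ w i :=
    fun h => by have := h.fst; omega
  simp [AΥ, hnone, inv', coinv', wsum]

end Recurrence
lemma pqInt_pv_qv_ne_zero {m : ℕ} (hm : m ≠ 0) : pqInt pv qv m ≠ 0 := by
  have hpoly : pqInt pv qv m = algebraMap (MvPolynomial (Fin 4) ℚ) K
      (∑ i ∈ range m, MvPolynomial.X 0 ^ (m - 1 - i) * MvPolynomial.X 1 ^ i) := by
    simp [pqInt, pv, qv]
  rw [hpoly, ne_eq, IsFractionRing.to_map_eq_zero_iff]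
  intro h
  -- at `p = 1, q = 0` only the term `p ^ (m - 1)` survives
  have := congrArg (MvPolynomial.eval fun i => if i = 1 then (0 : ℚ) else 1) h
  simp [zero_pow_eq] at this
  omega

lemma PowerSeries.mk_div_prod_eq_of_recurrence {F : Type*} [Field F] (κ : F) (c a b : ℕ → F)
    (hc : ∀ n, c (n + 1) ≠ 0) (ha : a 0 = 1)
    (hrec : ∀ n, κ * c (n + 1) * a n = a (n + 1) + b (n + 1)) :
    (mk fun n => if n = 0 then 0 else b n / ∏ i ∈ range n, c (i + 1))
      = (C κ * X - 1) * (mk fun n => a n / ∏ i ∈ range n, c (i + 1)) + 1 := by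
  ext n
  rw [sub_mul, mul_assoc, mul_comm X, map_add, map_sub, coeff_C_mul, coeff_one, coeff_mk,
    one_mul, coeff_mk]
  rcases n with _ | n
  · simp [ha]
  · rw [coeff_succ_mul_X, coeff_mk, if_neg n.succ_ne_zero, if_neg n.succ_ne_zero, add_zero,
      prod_range_succ, eq_sub_of_add_eq' (hrec n).symm, sub_div, mul_right_comm κ,
      mul_div_mul_right _ _ (hc n), mul_div_assoc]

theorem statement4_general (k j : ℕ) (hj : 1 ≤ j)
    (Υ : Set (Equiv.Perm (Fin j) × (Fin j → Fin k))) :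
    (∀ n : ℕ, 1 ≤ n →
      (∑ i ∈ Finset.range k, rv ^ i) * pqInt pv qv n * AΥ j k Υ (n - 1)
        = AΥ j k Υ n + BΥ j k Υ n) ∧
    (PowerSeries.mk fun n => if n = 0 then 0 else BΥ j k Υ n / pqFac pv qv n)
      = (PowerSeries.C (R := K) (∑ i ∈ Finset.range k, rv ^ i) * PowerSeries.X - 1) *
          (PowerSeries.mk fun n => AΥ j k Υ n / pqFac pv qv n) + 1 := by
  have hrec (n : ℕ) : (∑ i ∈ range k, rv ^ i) * pqInt pv qv (n + 1) * AΥ j k Υ n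
      = AΥ j k Υ (n + 1) + BΥ j k Υ (n + 1) :=
    (AΥ_succ_add_BΥ_succ j k Υ n).symm
  refine ⟨fun n hn => ?_, PowerSeries.mk_div_prod_eq_of_recurrence _ _ _ _
    (fun n => pqInt_pv_qv_ne_zero n.succ_ne_zero) (AΥ_zero j k Υ hj) hrec⟩
  obtain ⟨m, rfl⟩ := Nat.exists_eq_add_of_le' hn
  exact hrec m

theorem statement4 (k j : ℕ) (hk : 2 ≤ k) (hj : 1 ≤ j)
    (Υ : Set (Equiv.Perm (Fin j) × (Fin j → Fin k)))
    (hred : ∀ τu ∈ Υ, ∀ a : Fin j, (τu.2 a : ℕ) = redCount τu.2 a) :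
    (∀ n : ℕ, 1 ≤ n →
      (∑ i ∈ Finset.range k, rv ^ i) * pqInt pv qv n * AΥ j k Υ (n - 1)
        = AΥ j k Υ n + BΥ j k Υ n) ∧
    (PowerSeries.mk fun n => if n = 0 then 0 else BΥ j k Υ n / pqFac pv qv n)
      = (PowerSeries.C (R := K) (∑ i ∈ Finset.range k, rv ^ i) * PowerSeries.X - 1) *
          (PowerSeries.mk fun n => AΥ j k Υ n / pqFac pv qv n) + 1 :=
  statement4_general k j hj Υ
end
end

section
/- Fix integers k ≥ 2 and j ≥ 1, and a set Υ ⊆ C_k≀S_j such that red(u) = u for every (τ,u) ∈ Υ. Let N(t) = Σ_{n≥0} t^n/[n]_{p,q}! Σ_{(σ,w) ∈ C_k≀S_n} q^{inv(σ)} p^{coinv(σ)} r^{||w||} x^{Υ-nlap(σ,w)} and A(t) = Σ_{n≥0} t^n/[n]_{p,q}! Σ q^{inv(σ)} p^{coinv(σ)} r^{||w||}, the latter sum over all (σ,w) ∈ C_k≀S_n having no Υ-bi-match. Then, as formal power series in t, N(t) = A(t)/(1 − x(1 + ([k]_r t − 1)A(t))). -/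
open Finset
open scoped Classical

noncomputable section

/-- `Υ-nlap (σ,w)`: the maximum number of pairwise non-overlapping `Υ`-bi-matches in
`(σ,w)`, i.e. the maximum cardinality of a set of starting positions of `Υ`-bi-matches
any two distinct members of which differ by at least `j`. -/
def nlap {n : ℕ} (j k : ℕ) (Υ : Set (Equiv.Perm (Fin j) × (Fin j → Fin k)))
    (σ : Equiv.Perm (Fin n)) (w : Fin n → Fin k) : ℕ :=
  sSup {m : ℕ | ∃ S : Finset ℕ, S.card = m ∧ (∀ i ∈ S, biMatchAt j k Υ σ w i) ∧
    ∀ i ∈ S, ∀ i' ∈ S, i < i' → i + j ≤ i'}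

/-!
Cut a pair `(σ, w)` right after its first bi-match. If that match ends at position `l`, the
prefix of length `l` has its first bi-match at its very end, and `Υ-nlap (σ, w)` is one more
than `Υ-nlap` of the suffix, since a maximum family of non-overlapping matches can always be
chosen to start with the leftmost match. Recording the set of values taken on the prefix, the
weight `q^inv p^coinv` factors into the weights of the standardized prefix and suffix times a
factor whose sum over all `l`-subsets is the `p,q`-binomial coefficient `[n choose l]_{p,q}`.
For the `p,q`-exponential generating functions this gives `N = A + x B N`, where `B` counts the
pairs whose first bi-match ends at the last position. At `x = 1` every pair is counted, so
`N = 1 / (1 - [k]_r t)`, whence `B = 1 - (1 - [k]_r t) A`; solving for `N` gives the formula.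
-/

namespace BiMatch

open Equiv

section Shuffle

variable {l m : ℕ}

lemma card_compl_of_card_eq {X : Finset (Fin (l + m))} (hX : #X = l) : #Xᶜ = m := by
  simp [card_compl, hX]

def shuffleEquiv (X : Finset (Fin (l + m))) (hX : #X = l) : Fin l ⊕ Fin m ≃ Fin (l + m) :=
  (Equiv.sumCongr (X.orderIsoOfFin hX).toEquiv
    ((Xᶜ.orderIsoOfFin (card_compl_of_card_eq hX)).toEquiv.trans
      (Equiv.subtypeEquivRight fun _ => mem_compl))).trans (Equiv.sumCompl (· ∈ X))

/-- The permutation that takes the values in `X` on its first `l` positions, in the relative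
order `α`, and the values in `Xᶜ` on its last `m` positions, in the relative order `β`. -/
def shufflePerm (X : Finset (Fin (l + m))) (hX : #X = l) (α : Perm (Fin l))
    (β : Perm (Fin m)) : Perm (Fin (l + m)) :=
  finSumFinEquiv.symm.trans ((Equiv.sumCongr α β).trans (shuffleEquiv X hX))

variable (X : Finset (Fin (l + m))) (hX : #X = l) (α : Perm (Fin l)) (β : Perm (Fin m))

@[simp] lemma shufflePerm_castAdd (a : Fin l) :
    shufflePerm X hX α β (Fin.castAdd m a) = X.orderEmbOfFin hX (α a) := by
  simp only [shufflePerm, shuffleEquiv, Equiv.trans_apply, finSumFinEquiv_symm_apply_castAdd,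
    Equiv.sumCongr_apply, Sum.map_inl, Equiv.sumCompl_apply_inl]
  rfl

@[simp] lemma shufflePerm_natAdd (b : Fin m) :
    shufflePerm X hX α β (Fin.natAdd l b) =
      Xᶜ.orderEmbOfFin (card_compl_of_card_eq hX) (β b) := by
  simp only [shufflePerm, shuffleEquiv, Equiv.trans_apply, finSumFinEquiv_symm_apply_natAdd,
    Equiv.sumCongr_apply, Sum.map_inr, Equiv.sumCompl_apply_inr]
  rfl

lemma image_shufflePerm_castAdd :
    univ.image (fun a => shufflePerm X hX α β (Fin.castAdd m a)) = X := by
  simp only [shufflePerm_castAdd]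
  change univ.image (X.orderEmbOfFin hX ∘ α) = X
  rw [← image_image, image_univ_equiv, image_orderEmbOfFin_univ]

lemma shufflePerm_injective :
    Function.Injective fun t : {X : Finset (Fin (l + m)) // #X = l} × Perm (Fin l) ×
      Perm (Fin m) => shufflePerm t.1.1 t.1.2 t.2.1 t.2.2 := by
  rintro ⟨⟨X, hX⟩, α, β⟩ ⟨⟨X', hX'⟩, α', β'⟩ h
  obtain rfl : X = X' := by
    rw [← image_shufflePerm_castAdd X hX α β, ← image_shufflePerm_castAdd X' hX' α' β']
    simp only at h
    rw [h]
  have hα : α = α' := Equiv.ext fun a =>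
    (X.orderEmbOfFin hX).injective (by simpa using DFunLike.congr_fun h (Fin.castAdd m a))
  have hβ : β = β' := Equiv.ext fun b =>
    (Xᶜ.orderEmbOfFin (card_compl_of_card_eq hX)).injective
      (by simpa using DFunLike.congr_fun h (Fin.natAdd l b))
  rw [hα, hβ]

lemma shufflePerm_bijective :
    Function.Bijective fun t : {X : Finset (Fin (l + m)) // #X = l} × Perm (Fin l) ×
      Perm (Fin m) => shufflePerm t.1.1 t.1.2 t.2.1 t.2.2 := by
  refine (Fintype.bijective_iff_injective_and_card _).2 ⟨shufflePerm_injective, ?_⟩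
  simp only [Fintype.card_prod, Fintype.card_perm, Fintype.card_fin, Fintype.card_finset_len]
  rw [← mul_assoc, ← Nat.add_choose_mul_factorial_mul_factorial, Nat.choose_symm_add]

lemma sum_perm_eq_sum_shufflePerm {M : Type*} [AddCommMonoid M] (f : Perm (Fin (l + m)) → M) :
    ∑ σ, f σ = ∑ X : {X : Finset (Fin (l + m)) // #X = l}, ∑ α, ∑ β,
      f (shufflePerm X.1 X.2 α β) := by
  rw [← (Equiv.ofBijective _ shufflePerm_bijective).sum_comp]
  simp only [Fintype.sum_prod_type, Equiv.ofBijective_apply]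

lemma sum_shufflePerm_eq_mul {M : Type*} [CommSemiring M] (f : Perm (Fin (l + m)) → M)
    (c : Finset (Fin (l + m)) → M) (g : Perm (Fin l) → M) (h : Perm (Fin m) → M)
    (hf : ∀ X hX α β, f (shufflePerm X hX α β) = c X * g α * h β) :
    ∑ σ, f σ =
      (∑ X : {X : Finset (Fin (l + m)) // #X = l}, c X) * (∑ α, g α) * ∑ β, h β := by
  simp only [sum_perm_eq_sum_shufflePerm, hf]
  rw [sum_mul_sum, sum_mul]
  refine sum_congr rfl fun X _ => ?_
  rw [sum_mul]
  exact sum_congr rfl fun α _ => (mul_sum _ _ _).symm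

lemma sum_pi_fin_add {α M : Type*} [Fintype α] [AddCommMonoid M]
    (f : (Fin (l + m) → α) → M) :
    ∑ w, f w = ∑ w₁ : Fin l → α, ∑ w₂ : Fin m → α, f (Fin.append w₁ w₂) := by
  rw [← (Fin.appendEquiv l m).sum_comp, Fintype.sum_prod_type]
  rfl

end Shuffle

section Inversions

variable {l m : ℕ}

def crossInv {n : ℕ} (X : Finset (Fin n)) : ℕ := #{p ∈ X ×ˢ Xᶜ | p.2 < p.1}

def crossCoinv {n : ℕ} (X : Finset (Fin n)) : ℕ := #{p ∈ X ×ˢ Xᶜ | p.1 < p.2}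

variable (X : Finset (Fin (l + m))) (hX : #X = l) (α : Perm (Fin l)) (β : Perm (Fin m))

lemma card_filter_prod_orderEmbOfFin (R : Fin (l + m) → Fin (l + m) → Prop) [DecidableRel R] :
    #{p : Fin l × Fin m | R (X.orderEmbOfFin hX p.1)
      (Xᶜ.orderEmbOfFin (card_compl_of_card_eq hX) p.2)} = #{p ∈ X ×ˢ Xᶜ | R p.1 p.2} := by
  have hrange {Y : Finset (Fin (l + m))} {n : ℕ} (hY : #Y = n) {u} (hu : u ∈ Y) :
      ∃ a, Y.orderEmbOfFin hY a = u := by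
    rw [← Set.mem_range, range_orderEmbOfFin]; exact hu
  refine card_bij (fun p _ => (X.orderEmbOfFin hX p.1,
    Xᶜ.orderEmbOfFin (card_compl_of_card_eq hX) p.2)) ?_ ?_ ?_
  · intro p hp
    simpa [mem_filter] using hp
  · intro p _ p' _ h
    simp only [Prod.mk.injEq, EmbeddingLike.apply_eq_iff_eq] at h
    exact Prod.ext h.1 h.2
  · intro u hu
    simp only [mem_filter, mem_product] at hu
    obtain ⟨a, ha⟩ := hrange hX hu.1.1
    obtain ⟨b, hb⟩ := hrange (card_compl_of_card_eq hX) hu.1.2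
    exact ⟨(a, b), by simpa [ha, hb] using hu.2, by simp [ha, hb]⟩

lemma card_pairs_shufflePerm (R : Fin (l + m) → Fin (l + m) → Prop) [DecidableRel R] :
    #{p : Fin (l + m) × Fin (l + m) | p.1 < p.2 ∧
        R (shufflePerm X hX α β p.1) (shufflePerm X hX α β p.2)} =
      #{p : Fin l × Fin l | p.1 < p.2 ∧
          R (X.orderEmbOfFin hX (α p.1)) (X.orderEmbOfFin hX (α p.2))} +
        #{p ∈ X ×ˢ Xᶜ | R p.1 p.2} +
        #{p : Fin m × Fin m | p.1 < p.2 ∧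
          R (Xᶜ.orderEmbOfFin (card_compl_of_card_eq hX) (β p.1))
            (Xᶜ.orderEmbOfFin (card_compl_of_card_eq hX) (β p.2))} := by
  simp only [card_filter, Fintype.sum_prod_type, Fin.sum_univ_add, shufflePerm_castAdd,
    shufflePerm_natAdd]
  have hcc (a a' : Fin l) : Fin.castAdd m a < Fin.castAdd m a' ↔ a < a' :=
    (Fin.strictMono_castAdd m).lt_iff_lt
  have hcn (a : Fin l) (b : Fin m) : Fin.castAdd m a < Fin.natAdd l b := by
    rw [Fin.lt_def, Fin.val_castAdd, Fin.val_natAdd]; omega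
  have hnc (a : Fin l) (b : Fin m) : ¬ Fin.natAdd l b < Fin.castAdd m a := by
    rw [Fin.lt_def, Fin.val_castAdd, Fin.val_natAdd]; omega
  have hcross : ∑ a, ∑ b, (if R (X.orderEmbOfFin hX (α a))
      (Xᶜ.orderEmbOfFin (card_compl_of_card_eq hX) (β b)) then 1 else 0) =
        #{p ∈ X ×ˢ Xᶜ | R p.1 p.2} := by
    rw [← card_filter_prod_orderEmbOfFin X hX, card_filter, Fintype.sum_prod_type]
    exact Fintype.sum_equiv α _ _ fun a => Fintype.sum_equiv β _ _ fun b => rfl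
  simp only [hcc, hcn, hnc, Fin.natAdd_lt_natAdd_iff, true_and, false_and, if_false,
    sum_const_zero, zero_add, sum_add_distrib, hcross, card_filter]

lemma inv'_shufflePerm : inv' (shufflePerm X hX α β) = inv' α + crossInv X + inv' β := by
  simpa [inv', crossInv] using card_pairs_shufflePerm X hX α β fun u v => v < u

lemma coinv'_shufflePerm :
    coinv' (shufflePerm X hX α β) = coinv' α + crossCoinv X + coinv' β := by
  simpa [coinv', crossCoinv] using card_pairs_shufflePerm X hX α β (· < ·)

end Inversions

section Weights

variable (p q : K)

def permWeight {n : ℕ} (σ : Perm (Fin n)) : K := q ^ inv' σ * p ^ coinv' σ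

def shuffleWeight {n : ℕ} (X : Finset (Fin n)) : K := q ^ crossInv X * p ^ crossCoinv X

lemma permWeight_shufflePerm {l m : ℕ} (X : Finset (Fin (l + m))) (hX : #X = l)
    (α : Perm (Fin l)) (β : Perm (Fin m)) :
    permWeight p q (shufflePerm X hX α β) =
      shuffleWeight p q X * permWeight p q α * permWeight p q β := by
  simp only [permWeight, shuffleWeight, inv'_shufflePerm, coinv'_shufflePerm, pow_add]
  ring

lemma sum_permWeight_add (l m : ℕ) :
    ∑ σ : Perm (Fin (l + m)), permWeight p q σ =
      (∑ X : {X : Finset (Fin (l + m)) // #X = l}, shuffleWeight p q X.1) *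
        (∑ α : Perm (Fin l), permWeight p q α) * ∑ β : Perm (Fin m), permWeight p q β :=
  sum_shufflePerm_eq_mul _ _ _ _ (permWeight_shufflePerm p q)

lemma permWeight_of_le_one {n : ℕ} (hn : n ≤ 1) (σ : Perm (Fin n)) :
    permWeight p q σ = 1 := by
  have h (x : Fin n × Fin n) : ¬ x.1 < x.2 := by
    have := x.1.isLt; have := x.2.isLt; rw [Fin.lt_def]; omega
  simp [permWeight, inv', coinv', h]

lemma crossInv_singleton {n : ℕ} (v : Fin n) : crossInv {v} = v := by
  simp only [crossInv, singleton_product, filter_map, card_map]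
  rw [← Fin.card_Iio v]
  congr 1
  ext u
  simpa using ne_of_lt

lemma crossCoinv_singleton {n : ℕ} (v : Fin n) : crossCoinv {v} = n - 1 - v := by
  simp only [crossCoinv, singleton_product, filter_map, card_map]
  rw [← Fin.card_Ioi v]
  congr 1
  ext u
  simpa using ne_of_gt

lemma sum_shuffleWeight_card_one (n : ℕ) :
    ∑ X : {X : Finset (Fin (1 + n)) // #X = 1}, shuffleWeight p q X.1 = pqInt p q (n + 1) := by
  rw [← Fintype.sum_bijective
    (fun v : Fin (1 + n) => (⟨{v}, card_singleton v⟩ : {X // #X = 1}))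
    ⟨fun v v' h => singleton_injective (congrArg Subtype.val h),
      fun X => (card_eq_one.1 X.2).imp fun v hv => Subtype.ext hv.symm⟩ _ _ fun _ => rfl]
  simp only [shuffleWeight, crossInv_singleton, crossCoinv_singleton, pqInt]
  rw [Fin.sum_univ_eq_sum_range (fun i => q ^ i * p ^ (1 + n - 1 - i)), add_comm 1 n]
  exact sum_congr rfl fun i _ => mul_comm _ _

lemma sum_permWeight_eq_pqFac (n : ℕ) :
    ∑ σ : Perm (Fin n), permWeight p q σ = pqFac p q n := by
  induction n with
  | zero => simp [permWeight_of_le_one, pqFac]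
  | succ n ih =>
    rw [pqFac, prod_range_succ, ← pqFac, ← ih, ← sum_shuffleWeight_card_one p q n,
      add_comm n 1, sum_permWeight_add,
      sum_congr rfl fun σ _ => permWeight_of_le_one p q le_rfl σ]
    simp [mul_comm]

end Weights

section PqExponential

lemma pqInt_ne_zero {m : ℕ} (hm : 0 < m) : pqInt pv qv m ≠ 0 := by
  have h : pqInt pv qv m = algebraMap (MvPolynomial (Fin 4) ℚ) K
      (∑ i ∈ range m, MvPolynomial.X 0 ^ (m - 1 - i) * MvPolynomial.X 1 ^ i) := by
    simp [pqInt, pv, qv]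
  rw [h, Ne, IsFractionRing.to_map_eq_zero_iff]
  -- the polynomial takes the value `m` at `p = q = 1`
  intro h0
  have := congrArg (MvPolynomial.eval fun _ => (1 : ℚ)) h0
  simp only [map_sum, map_mul, map_pow, MvPolynomial.eval_X, one_pow, mul_one, sum_const,
    card_range, nsmul_eq_mul, map_zero, Nat.cast_eq_zero] at this
  omega

lemma pqFac_ne_zero (n : ℕ) : pqFac pv qv n ≠ 0 :=
  prod_ne_zero_iff.2 fun _ _ => pqInt_ne_zero (Nat.succ_pos _)

lemma sum_shuffleWeight_eq_pqBinom (l m : ℕ) :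
    ∑ X : {X : Finset (Fin (l + m)) // #X = l}, shuffleWeight pv qv X.1 =
      pqBinom pv qv (l + m) l := by
  have h := sum_permWeight_add pv qv l m
  simp only [sum_permWeight_eq_pqFac] at h
  rw [pqBinom, if_pos (Nat.le_add_right l m), add_tsub_cancel_left, h,
    mul_assoc, mul_div_cancel_right₀ _ (mul_ne_zero (pqFac_ne_zero l) (pqFac_ne_zero m))]

def pqEgf (f : ℕ → K) : PowerSeries K := PowerSeries.mk fun n => f n / pqFac pv qv n

lemma pqEgf_mul (f g : ℕ → K) :
    pqEgf f * pqEgf g =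
      pqEgf fun n => ∑ x ∈ antidiagonal n, pqBinom pv qv n x.1 * f x.1 * g x.2 := by
  ext n
  simp only [pqEgf, PowerSeries.coeff_mul, PowerSeries.coeff_mk, sum_div]
  refine sum_congr rfl fun x hx => ?_
  obtain rfl := mem_antidiagonal.1 hx
  have := pqFac_ne_zero x.1
  have := pqFac_ne_zero x.2
  have := pqFac_ne_zero (x.1 + x.2)
  rw [pqBinom, if_pos (Nat.le_add_right _ _), add_tsub_cancel_left]
  field_simp

end PqExponential

section Packing

variable (j : ℕ) (P : ℕ → Prop)

def IsPacking (S : Finset ℕ) : Prop :=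
  (∀ i ∈ S, P i) ∧ ∀ i ∈ S, ∀ i' ∈ S, i < i' → i + j ≤ i'

def packingNumber : ℕ := sSup {m : ℕ | ∃ S : Finset ℕ, #S = m ∧ IsPacking j P S}

variable {j P}

lemma bddAbove_packing {N : ℕ} (hP : ∀ i, P i → i ≤ N) :
    BddAbove {m : ℕ | ∃ S : Finset ℕ, #S = m ∧ IsPacking j P S} := by
  refine ⟨N + 1, ?_⟩
  rintro _ ⟨S, rfl, hS, -⟩
  simpa using card_le_card fun i hi => mem_range.2 (Nat.lt_succ_of_le (hP i (hS i hi)))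

lemma card_le_packingNumber {N : ℕ} (hP : ∀ i, P i → i ≤ N) {S : Finset ℕ}
    (hS : IsPacking j P S) : #S ≤ packingNumber j P :=
  le_csSup (bddAbove_packing hP) ⟨S, rfl, hS⟩

lemma exists_isPacking_card_eq {N : ℕ} (hP : ∀ i, P i → i ≤ N) :
    ∃ S, IsPacking j P S ∧ #S = packingNumber j P := by
  obtain ⟨S, hcard, hS⟩ :=
    Nat.sSup_mem (s := {m : ℕ | ∃ S : Finset ℕ, #S = m ∧ IsPacking j P S})
      ⟨0, ∅, rfl, by simp [IsPacking]⟩ (bddAbove_packing hP)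
  exact ⟨S, hS, hcard⟩

lemma packingNumber_le {M : ℕ} (h : ∀ S, IsPacking j P S → #S ≤ M) :
    packingNumber j P ≤ M :=
  csSup_le ⟨0, ∅, rfl, by simp [IsPacking]⟩ fun _ ⟨S, hcard, hS⟩ => hcard ▸ h S hS

lemma packingNumber_eq_zero (h : ∀ i, ¬ P i) : packingNumber j P = 0 :=
  Nat.eq_zero_of_le_zero <| packingNumber_le fun S hS => by
    rw [Nat.le_zero, card_eq_zero, eq_empty_iff_forall_notMem]
    exact fun i hi => h i (hS.1 i hi)

lemma packingNumber_le_succ {N s : ℕ} (hP : ∀ i, P (s + j + i) → i ≤ N)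
    (hmin : ∀ i < s, ¬ P i) :
    packingNumber j P ≤ packingNumber j (fun i => P (s + j + i)) + 1 := by
  refine packingNumber_le fun S hS => ?_
  obtain rfl | hne := S.eq_empty_or_nonempty
  · simp
  have hfar : ∀ i ∈ S.erase (S.min' hne), s + j ≤ i := fun i hi => by
    obtain ⟨hi0, hiS⟩ := mem_erase.1 hi
    have h1 := hS.2 _ (S.min'_mem hne) i hiS (lt_of_le_of_ne (S.min'_le i hiS) (Ne.symm hi0))
    have h2 : s ≤ S.min' hne := not_lt.1 fun h => hmin _ h (hS.1 _ (S.min'_mem hne))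
    omega
  have hinj : Set.InjOn (· - (s + j)) (S.erase (S.min' hne)) := fun a ha b hb hab => by
    have := hfar a ha; have := hfar b hb; simp only at hab; omega
  have hT : IsPacking j (fun i => P (s + j + i))
      ((S.erase (S.min' hne)).image (· - (s + j))) := by
    refine ⟨?_, ?_⟩
    · simp only [mem_image]
      rintro _ ⟨i, hi, rfl⟩
      rw [Nat.add_sub_cancel' (hfar i hi)]
      exact hS.1 i (mem_of_mem_erase hi)
    · simp only [mem_image]
      rintro _ ⟨i, hi, rfl⟩ _ ⟨i', hi', rfl⟩ hlt
      have := hfar i hi; have := hfar i' hi'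
      have := hS.2 i (mem_of_mem_erase hi) i' (mem_of_mem_erase hi') (by omega)
      omega
  have := card_le_packingNumber hP hT
  rw [card_image_of_injOn hinj, card_erase_of_mem (S.min'_mem hne)] at this
  omega

lemma succ_le_packingNumber (hj : 0 < j) {N s : ℕ} (hP : ∀ i, P i → i ≤ N) (hs : P s) :
    packingNumber j (fun i => P (s + j + i)) + 1 ≤ packingNumber j P := by
  obtain ⟨T, hT, hcard⟩ :=
    exists_isPacking_card_eq (P := fun i => P (s + j + i)) fun _ hi => (hP _ hi).trans' le_add_self
  have hs_notMem : s ∉ T.map (addLeftEmbedding (s + j)) := by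
    simp only [mem_map, addLeftEmbedding_apply]; omega
  rw [← hcard, ← card_map (addLeftEmbedding (s + j)), ← card_insert_of_notMem hs_notMem]
  refine card_le_packingNumber hP ⟨?_, ?_⟩
  · simp only [mem_insert, mem_map, addLeftEmbedding_apply]
    rintro _ (rfl | ⟨t, ht, rfl⟩)
    exacts [hs, hT.1 t ht]
  · simp only [mem_insert, mem_map, addLeftEmbedding_apply]
    rintro _ (rfl | ⟨t, ht, rfl⟩) _ (rfl | ⟨t', ht', rfl⟩) hlt
    · omega
    · omega
    · omega
    · have := hT.2 t ht t' ht' (by omega); omega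

/-- Greedy choice: some maximum packing contains the least point `s` of `P`, and its other
points lie at or beyond `s + j`. -/
lemma packingNumber_eq_succ (hj : 0 < j) {N : ℕ} (hP : ∀ i, P i → i ≤ N) {s : ℕ}
    (hs : P s) (hmin : ∀ i < s, ¬ P i) :
    packingNumber j P = packingNumber j (fun i => P (s + j + i)) + 1 :=
  le_antisymm (packingNumber_le_succ (fun _ hi => (hP _ hi).trans' le_add_self) hmin)
    (succ_le_packingNumber hj hP hs)

end Packing

section Matches

variable {j k : ℕ} (Υ : Set (Perm (Fin j) × (Fin j → Fin k)))

lemma biMatchAt_congr {n n' : ℕ} {σ : Perm (Fin n)} {σ' : Perm (Fin n')} {w : Fin n → Fin k}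
    {w' : Fin n' → Fin k} {i i' : ℕ} (hi : i + j ≤ n) (hi' : i' + j ≤ n')
    (hσ : ∀ a b : Fin j, σ ⟨i + b, by omega⟩ < σ ⟨i + a, by omega⟩ ↔
      σ' ⟨i' + b, by omega⟩ < σ' ⟨i' + a, by omega⟩)
    (hw : ∀ a : Fin j, w ⟨i + a, by omega⟩ = w' ⟨i' + a, by omega⟩) :
    biMatchAt j k Υ σ w i ↔ biMatchAt j k Υ σ' w' i' := by
  simp only [biMatchAt, hi, hi', exists_true_left, hσ, hw]

variable {l m : ℕ} (X : Finset (Fin (l + m))) (hX : #X = l) (α : Perm (Fin l))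
  (β : Perm (Fin m)) (w₁ : Fin l → Fin k) (w₂ : Fin m → Fin k)

lemma biMatchAt_shufflePerm_append_of_le {i : ℕ} (hi : i + j ≤ l) :
    biMatchAt j k Υ (shufflePerm X hX α β) (Fin.append w₁ w₂) i ↔
      biMatchAt j k Υ α w₁ i := by
  have hσ (c : ℕ) (hc : c < l) : shufflePerm X hX α β ⟨c, by omega⟩ =
      X.orderEmbOfFin hX (α ⟨c, hc⟩) := shufflePerm_castAdd X hX α β ⟨c, hc⟩
  refine biMatchAt_congr Υ (by omega) hi (fun a b => ?_) fun a =>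
    Fin.append_left w₁ w₂ ⟨i + a, by omega⟩
  rw [hσ _ (by omega), hσ _ (by omega), OrderEmbedding.lt_iff_lt]

lemma biMatchAt_shufflePerm_append_add (i : ℕ) :
    biMatchAt j k Υ (shufflePerm X hX α β) (Fin.append w₁ w₂) (l + i) ↔
      biMatchAt j k Υ β w₂ i := by
  by_cases hi : i + j ≤ m
  swap
  · exact iff_of_false (fun ⟨h, _⟩ => hi (by omega)) (fun ⟨h, _⟩ => hi h)
  have hσ (d : ℕ) (hd : d < m) : shufflePerm X hX α β ⟨l + d, by omega⟩ =
      Xᶜ.orderEmbOfFin (card_compl_of_card_eq hX) (β ⟨d, hd⟩) :=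
    shufflePerm_natAdd X hX α β ⟨d, hd⟩
  refine biMatchAt_congr Υ (by omega) hi (fun a b => ?_) (fun a => ?_)
  · simp only [add_assoc]
    rw [hσ _ (by omega), hσ _ (by omega), OrderEmbedding.lt_iff_lt]
  · simp only [add_assoc]
    exact Fin.append_right w₁ w₂ ⟨i + a, by omega⟩

end Matches

section Recurrence

variable {j k : ℕ} (Υ : Set (Perm (Fin j) × (Fin j → Fin k)))

lemma nlap_eq_packingNumber {n : ℕ} (σ : Perm (Fin n)) (w : Fin n → Fin k) :
    nlap j k Υ σ w = packingNumber j (biMatchAt j k Υ σ w) := rfl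

lemma add_le_of_biMatchAt {n : ℕ} {σ : Perm (Fin n)} {w : Fin n → Fin k} {i : ℕ}
    (h : biMatchAt j k Υ σ w i) : i + j ≤ n :=
  let ⟨hi, _⟩ := h; hi

def IsFirstBiMatch {n : ℕ} (σ : Perm (Fin n)) (w : Fin n → Fin k) (s : ℕ) : Prop :=
  biMatchAt j k Υ σ w s ∧ ∀ i < s, ¬ biMatchAt j k Υ σ w i

lemma IsFirstBiMatch.eq {n : ℕ} {σ : Perm (Fin n)} {w : Fin n → Fin k} {s s' : ℕ}
    (h : IsFirstBiMatch Υ σ w s) (h' : IsFirstBiMatch Υ σ w s') : s = s' := by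
  by_contra hne
  rcases Nat.lt_or_gt_of_ne hne with hlt | hlt
  exacts [h'.2 s hlt h.1, h.2 s' hlt h'.1]

def weight {n : ℕ} (σ : Perm (Fin n)) (w : Fin n → Fin k) : K :=
  permWeight pv qv σ * rv ^ wsum w

def nlapWeight (y : K) (n : ℕ) : K :=
  ∑ σ : Perm (Fin n), ∑ w : Fin n → Fin k, weight σ w * y ^ nlap j k Υ σ w

def firstMatchAtEndWeight (n : ℕ) : K :=
  ∑ σ : Perm (Fin n), ∑ w : Fin n → Fin k,
    if IsFirstBiMatch Υ σ w (n - j) then weight σ w else 0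

section ShuffledPair

variable {l m : ℕ} (X : Finset (Fin (l + m))) (hX : #X = l) (α : Perm (Fin l))
  (β : Perm (Fin m)) (w₁ : Fin l → Fin k) (w₂ : Fin m → Fin k)

lemma isFirstBiMatch_shufflePerm_append_iff (hl : j ≤ l) :
    IsFirstBiMatch Υ (shufflePerm X hX α β) (Fin.append w₁ w₂) (l - j) ↔
      IsFirstBiMatch Υ α w₁ (l - j) := by
  have h {i : ℕ} (hi : i ≤ l - j) := biMatchAt_shufflePerm_append_of_le Υ X hX α β w₁ w₂
    (i := i) (by omega)
  simp only [IsFirstBiMatch, h le_rfl]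
  exact and_congr_right' (forall₂_congr fun i hi => not_congr (h hi.le))

lemma nlap_shufflePerm_append (hj : 0 < j) (hl : j ≤ l) (h : IsFirstBiMatch Υ α w₁ (l - j)) :
    nlap j k Υ (shufflePerm X hX α β) (Fin.append w₁ w₂) = nlap j k Υ β w₂ + 1 := by
  rw [← isFirstBiMatch_shufflePerm_append_iff Υ X hX α β w₁ w₂ hl] at h
  have hbound (i : ℕ) (hi : biMatchAt j k Υ (shufflePerm X hX α β) (Fin.append w₁ w₂) i) :
      i ≤ l + m := by
    have := add_le_of_biMatchAt Υ hi; omega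
  rw [nlap_eq_packingNumber, packingNumber_eq_succ hj hbound h.1 h.2, Nat.sub_add_cancel hl]
  congr 2
  funext i
  exact propext (biMatchAt_shufflePerm_append_add Υ X hX α β w₁ w₂ i)

lemma weight_shufflePerm_append :
    weight (shufflePerm X hX α β) (Fin.append w₁ w₂) =
      shuffleWeight pv qv X * weight α w₁ * weight β w₂ := by
  simp only [weight, permWeight_shufflePerm, wsum, Fin.sum_univ_add, Fin.append_left,
    Fin.append_right, pow_add]
  ring

end ShuffledPair

/-- Cutting `(σ, w)` right after its first bi-match, which ends at position `l`. -/
lemma sum_ite_isFirstBiMatch (hj : 0 < j) {l n : ℕ} (hl : j ≤ l) (hln : l ≤ n) (y : K) :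
    ∑ σ : Perm (Fin n), ∑ w : Fin n → Fin k,
        (if IsFirstBiMatch Υ σ w (l - j) then weight σ w * y ^ nlap j k Υ σ w else 0) =
      y * pqBinom pv qv n l * firstMatchAtEndWeight Υ l * nlapWeight Υ y (n - l) := by
  obtain ⟨m, rfl⟩ := Nat.exists_eq_add_of_le hln
  rw [add_tsub_cancel_left, ← sum_shuffleWeight_eq_pqBinom, firstMatchAtEndWeight, nlapWeight]
  have := sum_shufflePerm_eq_mul (f := fun σ => ∑ w : Fin (l + m) → Fin k,
      (if IsFirstBiMatch Υ σ w (l - j) then weight σ w * y ^ nlap j k Υ σ w else 0))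
    (c := shuffleWeight pv qv)
    (g := fun α => ∑ w₁, if IsFirstBiMatch Υ α w₁ (l - j) then weight α w₁ else 0)
    (h := fun β => ∑ w₂, y * (weight β w₂ * y ^ nlap j k Υ β w₂)) fun X hX α β => by
      rw [mul_sum (a := shuffleWeight pv qv X), sum_mul_sum, sum_pi_fin_add]
      simp only [isFirstBiMatch_shufflePerm_append_iff Υ X hX α β _ _ hl]
      refine sum_congr rfl fun w₁ _ => sum_congr rfl fun w₂ _ => ?_
      split_ifs with h
      · rw [nlap_shufflePerm_append Υ X hX α β w₁ w₂ hj hl h, weight_shufflePerm_append]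
        ring
      · simp
  simp only [this, ← mul_sum]
  ring

lemma weight_mul_pow_nlap_eq (y : K) {n : ℕ} (σ : Perm (Fin n)) (w : Fin n → Fin k) :
    weight σ w * y ^ nlap j k Υ σ w =
      (if ∀ i, ¬ biMatchAt j k Υ σ w i then weight σ w else 0) +
        ∑ l ∈ Icc j n,
          if IsFirstBiMatch Υ σ w (l - j) then weight σ w * y ^ nlap j k Υ σ w else 0 := by
  by_cases hM : ∀ i, ¬ biMatchAt j k Υ σ w i
  · rw [if_pos hM, sum_eq_zero fun l _ => if_neg fun h => hM _ h.1, nlap_eq_packingNumber,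
      packingNumber_eq_zero hM, pow_zero, mul_one, add_zero]
  replace hM : ∃ i, biMatchAt j k Υ σ w i := not_forall_not.1 hM
  have hs : IsFirstBiMatch Υ σ w (Nat.find hM) :=
    ⟨Nat.find_spec hM, fun i hi => Nat.find_min hM hi⟩
  have hsn := add_le_of_biMatchAt Υ hs.1
  have hiff (l : ℕ) (hl : l ∈ Icc j n) :
      IsFirstBiMatch Υ σ w (l - j) ↔ Nat.find hM + j = l := by
    refine ⟨fun h => ?_, fun h => ?_⟩
    · have := h.eq Υ hs; have := (mem_Icc.1 hl).1; omega
    · rwa [← h, Nat.add_sub_cancel]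
  rw [if_neg (not_forall_not.2 hM), zero_add,
    sum_congr rfl fun l hl => if_congr (hiff l hl) rfl rfl, sum_ite_eq,
    if_pos (mem_Icc.2 ⟨by omega, hsn⟩)]

lemma firstMatchAtEndWeight_of_lt {n : ℕ} (hn : n < j) : firstMatchAtEndWeight Υ n = 0 :=
  sum_eq_zero fun _ _ => sum_eq_zero fun _ _ => if_neg fun h => by
    have := add_le_of_biMatchAt Υ h.1; omega

lemma nlapWeight_eq (hj : 0 < j) (y : K) (n : ℕ) :
    nlapWeight Υ y n = AΥ j k Υ n + y * ∑ x ∈ antidiagonal n,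
      pqBinom pv qv n x.1 * firstMatchAtEndWeight Υ x.1 * nlapWeight Υ y x.2 := by
  have hA : AΥ j k Υ n = ∑ σ : Perm (Fin n), ∑ w : Fin n → Fin k,
      if ∀ i, ¬ biMatchAt j k Υ σ w i then weight σ w else 0 := rfl
  have hsplit : nlapWeight Υ y n = AΥ j k Υ n + ∑ l ∈ Icc j n, ∑ σ : Perm (Fin n),
      ∑ w : Fin n → Fin k,
        if IsFirstBiMatch Υ σ w (l - j) then weight σ w * y ^ nlap j k Υ σ w else 0 := by
    rw [nlapWeight, hA, sum_comm (s := Icc j n), ← sum_add_distrib]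
    refine sum_congr rfl fun σ _ => ?_
    rw [sum_comm (s := Icc j n), ← sum_add_distrib]
    exact sum_congr rfl fun w _ => weight_mul_pow_nlap_eq Υ y σ w
  rw [hsplit, Nat.sum_antidiagonal_eq_sum_range_succ_mk, mul_sum]
  congr 1
  rw [← sum_subset (s₁ := Icc j n) (fun l hl => mem_range.2 (by have := mem_Icc.1 hl; omega))
    fun l hl hl' => ?_]
  · refine sum_congr rfl fun l hl => ?_
    rw [sum_ite_isFirstBiMatch Υ hj (mem_Icc.1 hl).1 (mem_Icc.1 hl).2]
    ring
  · rw [firstMatchAtEndWeight_of_lt Υ (by simp only [mem_range, mem_Icc] at hl hl'; omega)]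
    ring

lemma pqEgf_nlapWeight (hj : 0 < j) (y : K) :
    pqEgf (nlapWeight Υ y) =
      pqEgf (AΥ j k Υ) +
        PowerSeries.C y * (pqEgf (firstMatchAtEndWeight Υ) * pqEgf (nlapWeight Υ y)) := by
  ext n
  rw [pqEgf_mul]
  simp [pqEgf, nlapWeight_eq Υ hj y n, add_div, mul_div_assoc]

lemma nlapWeight_one (n : ℕ) :
    nlapWeight Υ 1 n = pqFac pv qv n * (∑ i ∈ range k, rv ^ i) ^ n := by
  simp only [nlapWeight, weight, one_pow, mul_one, ← mul_sum, ← sum_mul,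
    sum_permWeight_eq_pqFac]
  rw [← Fin.sum_univ_eq_sum_range, Fintype.sum_pow]
  simp only [wsum, prod_pow_eq_pow_sum]

lemma AΥ_zero (hj : 0 < j) : AΥ j k Υ 0 = 1 := by
  have h (σ : Perm (Fin 0)) (w : Fin 0 → Fin k) (i : ℕ) : ¬ biMatchAt j k Υ σ w i :=
    fun h => by have := add_le_of_biMatchAt Υ h; omega
  simp [AΥ, h, inv', coinv', wsum]

end Recurrence

lemma mk_pow_mul_one_sub_C_mul_X (a : K) :
    PowerSeries.mk (a ^ ·) * (1 - PowerSeries.C a * PowerSeries.X) = 1 := by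
  simpa [PowerSeries.rescale_mk, PowerSeries.rescale_X] using
    congrArg (PowerSeries.rescale a) (PowerSeries.mk_one_mul_one_sub_eq_one (S := K))

end BiMatch

theorem statement5_general (k j : ℕ) (hj : 1 ≤ j)
    (Υ : Set (Equiv.Perm (Fin j) × (Fin j → Fin k))) :
    (PowerSeries.mk fun n => (∑ σ : Equiv.Perm (Fin n), ∑ w : Fin n → Fin k,
        qv ^ inv' σ * pv ^ coinv' σ * rv ^ wsum w * xv ^ nlap j k Υ σ w) /
          pqFac pv qv n)
    = (PowerSeries.mk fun n => AΥ j k Υ n / pqFac pv qv n) *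
      (1 - PowerSeries.C xv * (1 +
        (PowerSeries.C (∑ i ∈ Finset.range k, rv ^ i) * PowerSeries.X - 1) *
          PowerSeries.mk fun n => AΥ j k Υ n / pqFac pv qv n))⁻¹ := by
  open BiMatch PowerSeries in
  set R : K := ∑ i ∈ range k, rv ^ i
  set A := pqEgf (AΥ j k Υ)
  set B := pqEgf (firstMatchAtEndWeight Υ)
  set N := pqEgf (nlapWeight Υ xv)
  have hN : N = A + C xv * (B * N) := pqEgf_nlapWeight Υ hj xv
  have hT : pqEgf (nlapWeight Υ 1) = A + B * pqEgf (nlapWeight Υ 1) := by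
    simpa using pqEgf_nlapWeight Υ hj 1
  have hgeom : pqEgf (nlapWeight Υ 1) * (1 - C R * X) = 1 := by
    convert mk_pow_mul_one_sub_C_mul_X R using 2
    ext n
    simp [pqEgf, nlapWeight_one, pqFac_ne_zero, R]
  -- setting `x = 1` counts every pair, which determines `B` in terms of `A`
  have hB : B = 1 - A * (1 - C R * X) := by
    linear_combination (-(1 - C R * X)) * hT + (1 - B) * hgeom
  have hA : constantCoeff A = 1 := by simp [A, pqEgf, AΥ_zero Υ hj, pqFac]
  change N = A * (1 - C xv * (1 + (C R * X - 1) * A))⁻¹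
  rw [eq_mul_inv_iff_mul_eq (by simp [hA])]
  linear_combination hN + C xv * N * hB

theorem statement5 (k j : ℕ) (hk : 2 ≤ k) (hj : 1 ≤ j)
    (Υ : Set (Equiv.Perm (Fin j) × (Fin j → Fin k)))
    (hred : ∀ τu ∈ Υ, ∀ a : Fin j, (τu.2 a : ℕ) = redCount τu.2 a) :
    (PowerSeries.mk fun n => (∑ σ : Equiv.Perm (Fin n), ∑ w : Fin n → Fin k,
        qv ^ inv' σ * pv ^ coinv' σ * rv ^ wsum w * xv ^ nlap j k Υ σ w) /
          pqFac pv qv n)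
    = (PowerSeries.mk fun n => AΥ j k Υ n / pqFac pv qv n) *
      (1 - PowerSeries.C xv * (1 +
        (PowerSeries.C (∑ i ∈ Finset.range k, rv ^ i) * PowerSeries.X - 1) *
          PowerSeries.mk fun n => AΥ j k Υ n / pqFac pv qv n))⁻¹ :=
  statement5_general k j hj Υ
end
end

section
/- For all integers k ≥ 2 and n ≥ 1, the number of pairs (σ,w) ∈ C_k≀S_n such that there is no index i with 1 ≤ i ≤ n−1, σ_i < σ_{i+1} and w_i = w_{i+1} equals Σ_{j=1}^{n} (−1)^{n−j} · Surj(n,j) · k^j, where Surj(n,j) denotes the number of surjective functions from an n-element set onto a j-element set (equivalently Surj(n,j) = j!·S(n,j), with S(n,j) the Stirling number of the second kind). -/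
open Finset
open scoped Classical

/-- The number of surjective functions from an `n`-element set onto a `j`-element set
(equal to `j! · S(n,j)` with `S(n,j)` the Stirling number of the second kind). -/
def Surj (n j : ℕ) : ℕ :=
  ((Finset.univ : Finset (Fin n → Fin j)).filter Function.Surjective).card

/-!
A pair `(σ, w)` is counted iff `w i ≠ w (i + 1)` at every ascent `i` of `σ`; passing to the
successive differences of `w` shows that there are `(k - 1) ^ a * k ^ (n - a)` such words, `a` being
the number of ascents. Expanding `(k - 1) ^ a` by the binomial theorem leaves
`∑ s, (-1) ^ s * k ^ (n - s) * ∑ σ, (a σ).choose s`, and the inner sum counts surjections onto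
`n - s` values: a pair `(σ, S)` with `S` an `s`-set of ascents of `σ` gives the map that is
constant on the runs of `σ` glued along `S` and increases by one from run to run; conversely `σ`
is the permutation sorting the surjection (ties broken by position) and `S` the set of places
where the sorted values stay level.
-/

lemma Nat.exists_eq_of_le_of_succ_le {f : ℕ → ℕ} (h0 : f 0 = 0) (hstep : ∀ t, f (t + 1) ≤ f t + 1)
    {N v : ℕ} (hv : v ≤ f N) : ∃ t ≤ N, f t = v := by
  induction N with
  | zero => exact ⟨0, le_rfl, by omega⟩
  | succ N ih =>
    by_cases h : v ≤ f N
    · obtain ⟨t, htN, ht⟩ := ih h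
      exact ⟨t, htN.trans N.le_succ, ht⟩
    · exact ⟨N + 1, le_rfl, by have := hstep N; omega⟩

lemma Tuple.eq_sort_of_lt_succ {α : Type*} [LinearOrder α] {m : ℕ} {f : Fin (m + 1) → α}
    {σ : Equiv.Perm (Fin (m + 1))}
    (h : ∀ i : Fin m, f (σ i.castSucc) < f (σ i.succ) ∨
      f (σ i.castSucc) = f (σ i.succ) ∧ σ i.castSucc < σ i.succ) :
    σ = Tuple.sort f :=
  Tuple.eq_sort_iff'.mpr <| Fin.strictMono_iff_lt_succ.mpr fun i =>
    Subtype.mk_lt_mk.mpr <| Prod.Lex.toLex_lt_toLex.mpr (h i)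

section Blocks
variable {m : ℕ}

/-- Positions `t` and `t + 1` of `Fin (m + 1)` are glued when `t ∈ S`; `blockIndex S t` is the
index of the run of glued positions containing `t`. -/
def blockIndex (S : Finset (Fin m)) (t : ℕ) : ℕ := #{i : Fin m | (i : ℕ) < t ∧ i ∉ S}

@[simp]
lemma blockIndex_zero (S : Finset (Fin m)) : blockIndex S 0 = 0 := by
  simp [blockIndex]

lemma blockIndex_succ (S : Finset (Fin m)) (i : Fin m) :
    blockIndex S (i + 1) = blockIndex S i + if i ∈ S then 0 else 1 := by
  have hsplit : univ.filter (fun j : Fin m => (j : ℕ) < i + 1 ∧ j ∉ S) =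
      univ.filter (fun j : Fin m => (j : ℕ) < i ∧ j ∉ S) ∪
        univ.filter (fun j => j = i ∧ j ∉ S) := by
    ext j
    simp only [mem_filter, mem_univ, true_and, mem_union]
    rw [Nat.lt_add_one_iff_lt_or_eq, Fin.val_inj]
    tauto
  rw [blockIndex, blockIndex, hsplit, card_union_of_disjoint]
  · split_ifs with hi <;> simp [hi, filter_and_not, filter_eq', sdiff_eq_self_of_disjoint]
  · simp only [disjoint_left, mem_filter, mem_univ, true_and]
    rintro j ⟨hj, -⟩ ⟨rfl, -⟩
    exact hj.false

lemma blockIndex_mono (S : Finset (Fin m)) : Monotone (blockIndex S) :=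
  fun _ _ hst =>
    card_le_card <| monotone_filter_right _ fun _ _ => And.imp_left fun h => h.trans_le hst

lemma blockIndex_of_le (S : Finset (Fin m)) {t : ℕ} (ht : m ≤ t) : blockIndex S t = m - #S := by
  have : univ.filter (fun i : Fin m => (i : ℕ) < t ∧ i ∉ S) = Sᶜ := by
    ext i
    simp [i.isLt.trans_le ht]
  rw [blockIndex, this, card_compl, Fintype.card_fin]

lemma blockIndex_le (S : Finset (Fin m)) (t : ℕ) : blockIndex S t ≤ m - #S :=
  (blockIndex_mono S (le_max_left t m)).trans_eq (blockIndex_of_le S (le_max_right t m))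

lemma blockIndex_succ_le (S : Finset (Fin m)) (t : ℕ) :
    blockIndex S (t + 1) ≤ blockIndex S t + 1 := by
  rcases lt_or_ge t m with ht | ht
  · have := blockIndex_succ S ⟨t, ht⟩
    split_ifs at this <;> simp only at this <;> omega
  · rw [blockIndex_of_le S ht, blockIndex_of_le S (by omega)]
    omega

noncomputable def levelEdges {α : Type*} (g : Fin (m + 1) → α) : Finset (Fin m) :=
  {i | g i.castSucc = g i.succ}

def blockMap (S : Finset (Fin m)) (j : ℕ) (hj : m - #S < j) (t : Fin (m + 1)) : Fin j :=
  ⟨blockIndex S t, (blockIndex_le S t).trans_lt hj⟩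

variable (S : Finset (Fin m)) {j : ℕ} (hj : m - #S < j)

lemma surjective_blockMap (hj' : j ≤ m - #S + 1) : Function.Surjective (blockMap S j hj) := by
  intro v
  obtain ⟨t, htm, ht⟩ := Nat.exists_eq_of_le_of_succ_le (blockIndex_zero S) (blockIndex_succ_le S)
    (N := m) (v := v) (by rw [blockIndex_of_le S le_rfl]; omega)
  exact ⟨⟨t, by omega⟩, Fin.ext ht⟩

lemma levelEdges_blockMap : levelEdges (blockMap S j hj) = S := by
  ext i
  have := blockIndex_succ S i
  simp only [levelEdges, blockMap, mem_filter, mem_univ, true_and, Fin.mk.injEq]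
  split_ifs at this with hi <;> simp [this, hi]

end Blocks

section MonotoneSurjective
variable {m j : ℕ} {g : Fin (m + 1) → Fin j}

lemma Monotone.val_succ_le_of_surjective (hmono : Monotone g) (hsurj : Function.Surjective g)
    (i : Fin m) : (g i.succ : ℕ) ≤ g i.castSucc + 1 := by
  by_contra! hgap
  obtain ⟨x, hx⟩ := hsurj ⟨g i.castSucc + 1, by omega⟩
  rcases le_or_gt x i.castSucc with h | h
  · have := Fin.le_def.mp (hmono h)
    simp only [hx] at this
    omega
  · have := Fin.le_def.mp (hmono (Fin.castSucc_lt_iff_succ_le.mp h))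
    simp only [hx] at this
    omega

lemma Monotone.val_eq_blockIndex_levelEdges (hmono : Monotone g) (hsurj : Function.Surjective g)
    (t : Fin (m + 1)) : (g t : ℕ) = blockIndex (levelEdges g) t := by
  induction t using Fin.induction with
  | zero =>
    obtain ⟨x, hx⟩ := hsurj ⟨0, (g 0).pos⟩
    have := Fin.le_def.mp (hmono (Fin.zero_le x))
    simp only [hx] at this
    simp [Nat.le_zero.mp this]
  | succ i ih =>
    have hstep := hmono.val_succ_le_of_surjective hsurj i
    have hle := Fin.le_def.mp (hmono i.castSucc_le_succ)
    rw [Fin.val_castSucc] at ih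
    rw [Fin.val_succ, blockIndex_succ, ← ih]
    by_cases hi : g i.castSucc = g i.succ
    · simp [levelEdges, hi]
    · have : (g i.castSucc : ℕ) ≠ g i.succ := Fin.val_ne_of_ne hi
      simp only [levelEdges, mem_filter, mem_univ, true_and, hi, if_false]
      omega

lemma Monotone.blockMap_levelEdges (hmono : Monotone g) (hsurj : Function.Surjective g)
    (hj : m - #(levelEdges g) < j) : blockMap (levelEdges g) j hj = g :=
  funext fun t => Fin.ext (hmono.val_eq_blockIndex_levelEdges hsurj t).symm

lemma Monotone.card_levelEdges (hmono : Monotone g) (hsurj : Function.Surjective g) :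
    #(levelEdges g) = m + 1 - j := by
  obtain ⟨x, hx⟩ := hsurj ⟨j - 1, by have := (g 0).pos; omega⟩
  have htop := hmono.val_eq_blockIndex_levelEdges hsurj (Fin.last m)
  rw [blockIndex_of_le _ (Fin.val_last m).ge] at htop
  have hlast := Fin.le_def.mp (hmono (Fin.le_last x))
  simp only [hx] at hlast
  have := (g (Fin.last m)).isLt
  have := card_le_univ (levelEdges g)
  simp only [Fintype.card_fin] at this
  omega

end MonotoneSurjective

section Ascents
variable {m : ℕ}

noncomputable def ascents (σ : Equiv.Perm (Fin (m + 1))) : Finset (Fin m) :=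
  {i | σ i.castSucc < σ i.succ}

lemma sort_blockMap_comp_symm {σ : Equiv.Perm (Fin (m + 1))} {S : Finset (Fin m)}
    (hS : S ⊆ ascents σ) {j : ℕ} (hj : m - #S < j) :
    Tuple.sort (blockMap S j hj ∘ σ.symm) = σ := by
  refine (Tuple.eq_sort_of_lt_succ fun i => ?_).symm
  have hstep := blockIndex_succ S i
  simp only [Function.comp_apply, Equiv.symm_apply_apply, blockMap, Fin.mk_lt_mk, Fin.mk.injEq,
    Fin.val_castSucc, Fin.val_succ]
  by_cases hi : i ∈ S
  · have hasc := hS hi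
    simp only [ascents, mem_filter, mem_univ, true_and] at hasc
    simp only [hi, if_true] at hstep
    exact Or.inr ⟨hstep.symm, hasc⟩
  · simp only [hi, if_false] at hstep
    omega

lemma levelEdges_sort_subset_ascents {j : ℕ} (f : Fin (m + 1) → Fin j) :
    levelEdges (f ∘ Tuple.sort f) ⊆ ascents (Tuple.sort f) := by
  intro i hi
  simp only [levelEdges, ascents, mem_filter, mem_univ, true_and] at hi ⊢
  exact (Tuple.eq_sort_iff.mp rfl).2 _ _ Fin.castSucc_lt_succ hi

theorem card_sigma_ascents_eq_surj {s : ℕ} (hs : s ≤ m) :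
    #(univ.sigma fun σ : Equiv.Perm (Fin (m + 1)) => (ascents σ).powersetCard s) =
      Surj (m + 1) (m + 1 - s) := by
  have hmem : ∀ p : (_ : Equiv.Perm (Fin (m + 1))) × Finset (Fin m),
      p ∈ univ.sigma (fun σ => (ascents σ).powersetCard s) ↔ p.2 ⊆ ascents p.1 ∧ #p.2 = s := by
    simp [mem_powersetCard]
  refine card_bij'
    (fun p hp => blockMap p.2 (m + 1 - s) (by have := ((hmem p).mp hp).2; omega) ∘ p.1.symm)
    (fun f _ => ⟨Tuple.sort f, levelEdges (f ∘ Tuple.sort f)⟩) ?_ ?_ ?_ ?_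
  · intro ⟨σ, S⟩ hp
    obtain ⟨-, hcard : #S = s⟩ := (hmem _).mp hp
    simp only [mem_filter, mem_univ, true_and]
    exact (surjective_blockMap S _ (by omega)).comp σ.symm.surjective
  · intro f hf
    simp only [mem_filter, mem_univ, true_and] at hf
    have hmono := Tuple.monotone_sort f
    refine (hmem _).mpr ⟨levelEdges_sort_subset_ascents f, ?_⟩
    rw [hmono.card_levelEdges (hf.comp (Tuple.sort f).surjective)]
    omega
  · intro ⟨σ, S⟩ hp
    obtain ⟨hsub, -⟩ := (hmem _).mp hp
    simp only [sort_blockMap_comp_symm hsub, Function.comp_assoc, Equiv.symm_comp_self,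
      Function.comp_id, levelEdges_blockMap]
  · intro f hf
    simp only [mem_filter, mem_univ, true_and] at hf
    have hmono := Tuple.monotone_sort f
    rw [hmono.blockMap_levelEdges (hf.comp (Tuple.sort f).surjective), Function.comp_assoc,
      Equiv.self_comp_symm, Function.comp_id]

theorem sum_choose_card_ascents {s : ℕ} (hs : s ≤ m) :
    ∑ σ : Equiv.Perm (Fin (m + 1)), (#(ascents σ)).choose s = Surj (m + 1) (m + 1 - s) := by
  simp only [← card_powersetCard, ← card_sigma, card_sigma_ascents_eq_surj hs]

end Ascents

section Words
variable {G : Type*} [AddGroup G] {m : ℕ}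

def headAndDiffs (w : Fin (m + 1) → G) : G × (Fin m → G) :=
  (w 0, fun i => w i.succ - w i.castSucc)

lemma headAndDiffs_injective : Function.Injective (headAndDiffs (G := G) (m := m)) := by
  intro w w' h
  simp only [headAndDiffs, Prod.mk.injEq, funext_iff] at h
  obtain ⟨h0, hdiff⟩ := h
  funext t
  induction t using Fin.induction with
  | zero => exact h0
  | succ i ih => simpa [ih] using hdiff i

variable [Fintype G]

lemma headAndDiffs_bijective : Function.Bijective (headAndDiffs (G := G) (m := m)) :=
  (Fintype.bijective_iff_injective_and_card _).mpr
    ⟨headAndDiffs_injective, by simp [Fintype.card_prod, pow_succ']⟩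

theorem card_filter_forall_castSucc_ne_succ (A : Finset (Fin m)) :
    #{w : Fin (m + 1) → G | ∀ i ∈ A, w i.castSucc ≠ w i.succ} =
      (Fintype.card G - 1) ^ #A * Fintype.card G ^ (m + 1 - #A) := by
  let D : Fin m → Finset G := fun i => if i ∈ A then {0}ᶜ else univ
  have hcount : #{w : Fin (m + 1) → G | ∀ i ∈ A, w i.castSucc ≠ w i.succ} =
      #((univ : Finset G) ×ˢ Fintype.piFinset D) := by
    refine card_equiv (Equiv.ofBijective _ headAndDiffs_bijective) fun w => ?_
    simp only [mem_filter, mem_univ, true_and, mem_product, Fintype.mem_piFinset,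
      Equiv.ofBijective_apply, headAndDiffs, D]
    refine forall_congr' fun i => ?_
    split_ifs with hi <;> simp [hi, sub_eq_zero, eq_comm]
  have hA : #A ≤ m := by simpa using card_le_univ A
  rw [hcount, card_product, Fintype.card_piFinset]
  have hD : ∀ i, #(D i) = if i ∈ A then Fintype.card G - 1 else Fintype.card G := by
    intro i
    split_ifs with hi <;> simp [D, hi, card_compl]
  simp only [hD, prod_ite, prod_const, filter_mem_eq_inter, univ_inter, filter_not,
    ← compl_eq_univ_sdiff, card_compl, Fintype.card_fin, card_univ]
  rw [show m + 1 - #A = m - #A + 1 by omega, pow_succ]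
  ring

end Words

lemma sub_one_pow_mul_pow_eq_sum {R : Type*} [CommRing R] (x : R) {a n : ℕ} (ha : a < n) :
    (x - 1) ^ a * x ^ (n - a) = ∑ s ∈ range n, (-1) ^ s * (a.choose s : R) * x ^ (n - s) := by
  calc (x - 1) ^ a * x ^ (n - a)
      = ∑ s ∈ range (a + 1), (-1) ^ s * (a.choose s : R) * x ^ (n - s) := by
        rw [sub_eq_neg_add, add_pow, sum_mul]
        refine sum_congr rfl fun s hs => ?_
        have hpow : x ^ (a - s) * x ^ (n - a) = x ^ (n - s) := by
          rw [← pow_add]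
          congr 1
          have := mem_range.mp hs
          omega
        linear_combination (-1) ^ s * (a.choose s : R) * hpow
    _ = ∑ s ∈ range n, (-1) ^ s * (a.choose s : R) * x ^ (n - s) :=
        sum_subset (range_subset_range.mpr ha) fun s _ hsa => by
          rw [Nat.choose_eq_zero_of_lt (by simpa using hsa)]
          simp

lemma not_exists_adjacent_ascent_eq_iff {α : Type*} {m : ℕ} (σ : Equiv.Perm (Fin (m + 1)))
    (w : Fin (m + 1) → α) :
    (¬ ∃ p : Fin (m + 1) × Fin (m + 1), (p.2 : ℕ) = p.1 + 1 ∧ σ p.1 < σ p.2 ∧ w p.1 = w p.2) ↔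
      ∀ i ∈ ascents σ, w i.castSucc ≠ w i.succ := by
  simp only [ascents, mem_filter, mem_univ, true_and, not_exists, not_and, Prod.forall]
  refine ⟨fun h i hasc => h _ _ rfl hasc, fun h a b hab hasc => ?_⟩
  obtain ⟨i, rfl, rfl⟩ : ∃ i : Fin m, i.castSucc = a ∧ i.succ = b :=
    ⟨⟨a, by omega⟩, rfl, Fin.ext (by simp [hab])⟩
  exact h i hasc

theorem card_filter_forall_ascents_ne (k m : ℕ) [NeZero k] :
    #{sw : Equiv.Perm (Fin (m + 1)) × (Fin (m + 1) → Fin k) |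
        ∀ i ∈ ascents sw.1, sw.2 i.castSucc ≠ sw.2 i.succ} =
      ∑ σ : Equiv.Perm (Fin (m + 1)), (k - 1) ^ #(ascents σ) * k ^ (m + 1 - #(ascents σ)) := by
  rw [card_filter, Fintype.sum_prod_type]
  refine sum_congr rfl fun σ _ => ?_
  have hwords := card_filter_forall_castSucc_ne_succ (G := Fin k) (ascents σ)
  rw [Fintype.card_fin] at hwords
  rw [← card_filter]
  convert hwords

lemma sum_range_sub_eq_sum_Icc {M : Type*} [AddCommMonoid M] (f : ℕ → M) (n : ℕ) :
    ∑ s ∈ range n, f (n - s) = ∑ j ∈ Icc 1 n, f j := by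
  rw [range_eq_Ico, sum_Ico_reflect f 0 n.le_succ, Nat.add_sub_cancel_left, Nat.sub_zero,
    Ico_add_one_right_eq_Icc]

theorem statement17 (k n : ℕ) (hk : 2 ≤ k) (hn : 1 ≤ n) :
    (((Finset.univ : Finset (Equiv.Perm (Fin n) × (Fin n → Fin k))).filter
        (fun sw => ¬ ∃ p : Fin n × Fin n, (p.2 : ℕ) = (p.1 : ℕ) + 1 ∧
          sw.1 p.1 < sw.1 p.2 ∧ sw.2 p.1 = sw.2 p.2)).card : ℤ)
      = ∑ j ∈ Finset.Icc 1 n, (-1 : ℤ) ^ (n - j) * (Surj n j : ℤ) * (k : ℤ) ^ j := by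
  obtain ⟨m, rfl⟩ : ∃ m, n = m + 1 := ⟨n - 1, by omega⟩
  have : NeZero k := ⟨by omega⟩
  have hasc (σ : Equiv.Perm (Fin (m + 1))) : #(ascents σ) < m + 1 := by
    simpa [Nat.lt_succ_iff] using card_le_univ (ascents σ)
  simp only [not_exists_adjacent_ascent_eq_iff, card_filter_forall_ascents_ne]
  push_cast [Nat.cast_sub (by omega : 1 ≤ k)]
  simp only [sub_one_pow_mul_pow_eq_sum _ (hasc _)]
  rw [sum_comm, ← sum_range_sub_eq_sum_Icc]
  refine sum_congr rfl fun s hs => ?_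
  have hs : s ≤ m := Nat.lt_succ_iff.mp (mem_range.mp hs)
  rw [← sum_mul, ← mul_sum, ← Nat.cast_sum, sum_choose_card_ascents hs,
    Nat.sub_sub_self (by omega : s ≤ m + 1)]
end

section
/- For all integers k ≥ 2 and n ≥ 1, the number of pairs (σ,w) ∈ C_k≀S_n such that there is no index i with 1 ≤ i ≤ n−1, σ_i < σ_{i+1} and w_i ≠ w_{i+1} equals Σ_{σ ∈ S_n} k^{des(σ)+1}, where des(σ) = #{i : 1 ≤ i ≤ n−1, σ_i > σ_{i+1}} is the number of descents of σ. -/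
/-!
For a fixed permutation `σ` of `Fin (m + 1)`, a colouring `w` is admissible exactly when it is
constant across every ascent `σ i < σ (i + 1)`, i.e. constant on each maximal ascending run of `σ`.
The gaps that are not ascents are the `des σ` descents, which cut `Fin (m + 1)` into `des σ + 1`
runs, so there are `k ^ (des σ + 1)` admissible colourings; summing over `σ` gives the theorem.
The count `k ^ (#unlinked gaps + 1)` holds for any set of gaps across which `w` must be constant,
by induction on the length: the first letter is forced across a linked gap and free otherwise.
-/

open Finset
open scoped Classical

/-- The number of descents of a permutation `σ` of `{1,…,n}`. -/
def des {n : ℕ} (σ : Equiv.Perm (Fin n)) : ℕ :=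
  ((Finset.univ : Finset (Fin n × Fin n)).filter
    (fun p => (p.2 : ℕ) = (p.1 : ℕ) + 1 ∧ σ p.2 < σ p.1)).card

namespace Fin

variable {m : ℕ}

theorem exists_castSucc_eq_and_succ_eq {i j : Fin (m + 1)} (h : (j : ℕ) = i + 1) :
    ∃ k : Fin m, k.castSucc = i ∧ k.succ = j :=
  ⟨⟨i, by omega⟩, rfl, Fin.ext h.symm⟩

theorem exists_adjacent_iff {P : Fin (m + 1) → Fin (m + 1) → Prop} :
    (∃ p : Fin (m + 1) × Fin (m + 1), (p.2 : ℕ) = p.1 + 1 ∧ P p.1 p.2) ↔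
      ∃ i : Fin m, P i.castSucc i.succ := by
  constructor
  · rintro ⟨⟨i, j⟩, hij, h⟩
    obtain ⟨k, rfl, rfl⟩ := exists_castSucc_eq_and_succ_eq hij
    exact ⟨k, h⟩
  · rintro ⟨i, h⟩
    exact ⟨(i.castSucc, i.succ), by simp, h⟩

theorem card_filter_adjacent (P : Fin (m + 1) → Fin (m + 1) → Prop) [DecidableRel P] :
    #{p : Fin (m + 1) × Fin (m + 1) | (p.2 : ℕ) = p.1 + 1 ∧ P p.1 p.2} =
      #{i : Fin m | P i.castSucc i.succ} := by
  refine (card_bij (fun i _ => (i.castSucc, i.succ)) (fun i hi => by simpa using hi)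
    (fun i _ j _ h => castSucc_injective _ (congrArg Prod.fst h)) ?_).symm
  rintro ⟨i, j⟩ hp
  obtain ⟨hij, h⟩ := (mem_filter.1 hp).2
  obtain ⟨k, rfl, rfl⟩ := exists_castSucc_eq_and_succ_eq hij
  exact ⟨k, by simpa using h, rfl⟩

end Fin

theorem des_eq_card_filter_not_lt {m : ℕ} (σ : Equiv.Perm (Fin (m + 1))) :
    des σ = #{i : Fin m | ¬ σ i.castSucc < σ i.succ} := by
  rw [des, Fin.card_filter_adjacent (fun i j => σ j < σ i)]
  refine congrArg card (filter_congr fun i _ => ?_)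
  rw [not_lt, lt_iff_le_and_ne, and_iff_left (σ.injective.ne Fin.castSucc_lt_succ.ne')]

section IsConstantAcross

variable {α : Type*}

def IsConstantAcross {n : ℕ} (b : Fin n → Prop) (w : Fin (n + 1) → α) : Prop :=
  ∀ i, b i → w i.castSucc = w i.succ

theorem isConstantAcross_cons {n : ℕ} {b : Fin (n + 1) → Prop} {a : α} {w : Fin (n + 1) → α} :
    IsConstantAcross b (Fin.cons a w) ↔
      (b 0 → a = w 0) ∧ IsConstantAcross (fun i => b i.succ) w := by
  simp only [IsConstantAcross, Fin.forall_fin_succ, ← Fin.succ_castSucc]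
  simp

theorem card_filter_isConstantAcross [Fintype α] (n : ℕ) (b : Fin n → Prop) [DecidablePred b] :
    #{w : Fin (n + 1) → α | IsConstantAcross b w} = Fintype.card α ^ (#{i | ¬ b i} + 1) := by
  induction n with
  | zero => simp [IsConstantAcross]
  | succ n ih =>
    set S := ({w | IsConstantAcross (fun i => b i.succ) w} : Finset (Fin (n + 1) → α))
    have hcons : #{w : Fin (n + 2) → α | IsConstantAcross b w} =
        #{p : α × (Fin (n + 1) → α) | (b 0 → p.1 = p.2 0) ∧ p.2 ∈ S} :=
      (card_equiv (Fin.consEquiv fun _ => α) fun p => by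
        simp only [mem_filter, mem_univ, true_and, S]
        exact isConstantAcross_cons.symm).symm
    have hS : #S = Fintype.card α ^ (#{i | ¬ b (Fin.succ i)} + 1) := ih _
    rw [hcons, Fin.card_filter_univ_succ']
    by_cases h0 : b 0
    · simp only [h0, true_implies, not_true_eq_false, if_false, zero_add]
      rw [← hS]
      exact card_nbij' Prod.snd (fun w => (w 0, w)) (fun p hp => (mem_filter.1 hp).2.2)
        (fun w hw => by simpa using hw) (fun p hp => Prod.ext (mem_filter.1 hp).2.1.symm rfl)
        (fun _ _ => rfl)
    · have hprod : ({p | (b 0 → p.1 = p.2 0) ∧ p.2 ∈ S} : Finset (α × (Fin (n + 1) → α))) =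
          univ ×ˢ S := by
        ext; simp [h0]
      rw [hprod, card_product, hS, card_univ, if_pos h0]
      ring

end IsConstantAcross

theorem statement18_general (k n : ℕ) (hn : 1 ≤ n) :
    ((Finset.univ : Finset (Equiv.Perm (Fin n) × (Fin n → Fin k))).filter
        (fun sw => ¬ ∃ p : Fin n × Fin n, (p.2 : ℕ) = (p.1 : ℕ) + 1 ∧
          sw.1 p.1 < sw.1 p.2 ∧ sw.2 p.1 ≠ sw.2 p.2)).card
      = ∑ σ : Equiv.Perm (Fin n), k ^ (des σ + 1) := by
  obtain ⟨m, rfl⟩ := Nat.exists_eq_add_of_le' hn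
  rw [card_filter, Fintype.sum_prod_type]
  refine sum_congr rfl fun σ _ => ?_
  have hcond : ∀ w : Fin (m + 1) → Fin k,
      (¬ ∃ p : Fin (m + 1) × Fin (m + 1), (p.2 : ℕ) = p.1 + 1 ∧ σ p.1 < σ p.2 ∧ w p.1 ≠ w p.2) ↔
        IsConstantAcross (fun i => σ i.castSucc < σ i.succ) w := by
    intro w
    rw [Fin.exists_adjacent_iff (P := fun i j => σ i < σ j ∧ w i ≠ w j)]
    simp [IsConstantAcross]
  simp only [← card_filter, hcond, card_filter_isConstantAcross, Fintype.card_fin,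
    des_eq_card_filter_not_lt]

theorem statement18 (k n : ℕ) (hk : 2 ≤ k) (hn : 1 ≤ n) :
    ((Finset.univ : Finset (Equiv.Perm (Fin n) × (Fin n → Fin k))).filter
        (fun sw => ¬ ∃ p : Fin n × Fin n, (p.2 : ℕ) = (p.1 : ℕ) + 1 ∧
          sw.1 p.1 < sw.1 p.2 ∧ sw.2 p.1 ≠ sw.2 p.2)).card
      = ∑ σ : Equiv.Perm (Fin n), k ^ (des σ + 1) :=
  statement18_general k n hn
end

section
/- For all integers k ≥ 2 and n ≥ 1, the number of pairs (σ,w) ∈ C_k≀S_n such that there is no index i with 1 ≤ i ≤ n−1, σ_i < σ_{i+1} and w_i ≤ w_{i+1} (i.e. ris(σ,w) = 0) equals Σ (−1)^{n−ℓ} · (n!/(b_1!⋯b_ℓ!)) · Π_{i=1}^{ℓ} binom(b_i + k − 1, b_i), the sum taken over all compositions (b_1, …, b_ℓ) of n (sequences of positive integers with b_1 + … + b_ℓ = n). -/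
/-!
Inclusion–exclusion over the set of positions at which a rise is forced. Such sets are the
complements of the cut sets of compositions `(b₁, …, bₗ)` of `n`. Forcing a rise at every position
inside the blocks means that `σ` increases and `w` weakly increases on each block: there are
`n! / (b₁! ⋯ bₗ!)` such `σ`, because every permutation becomes block-increasing after a unique
permutation of each block, and `∏ binom(bᵢ + k - 1, bᵢ)` such `w`, by stars and bars. The sign is
`(-1)^(n - ℓ)` because `ℓ - 1` of the `n - 1` positions are cuts.
-/

open Finset
open scoped Classical

theorem card_monotone_fin_eq_choose {α : Type*} [LinearOrder α] [Fintype α] (b : ℕ) :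
    Fintype.card {f : Fin b → α // Monotone f} = (Fintype.card α + b - 1).choose b := by
  let toSym : {f : Fin b → α // Monotone f} → Sym α b := fun f => ⟨List.ofFn f.1, by simp⟩
  have hbij : Function.Bijective toSym := by
    constructor
    · rintro ⟨f, hf⟩ ⟨g, hg⟩ h
      have hperm : List.Perm (List.ofFn f) (List.ofFn g) := Quotient.exact (congrArg Subtype.val h)
      exact Subtype.ext (List.ofFn_injective
        (hperm.eq_of_sortedLE hf.sortedLE_ofFn hg.sortedLE_ofFn))
    · rintro ⟨s, rfl⟩
      set l := s.sort (· ≤ ·)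
      have hl : l.length = Multiset.card s := s.length_sort _
      refine ⟨⟨fun i => l.get (i.cast hl.symm),
        fun i j hij => (s.pairwise_sort _).sortedLE.monotone_get hij⟩, Subtype.ext ?_⟩
      change ((List.ofFn fun i => l.get (i.cast hl.symm) : List α) : Multiset α) = s
      rw [← List.ofFn_congr hl, List.ofFn_get, Multiset.sort_eq]
  rw [Fintype.card_congr (Equiv.ofBijective toSym hbij), Sym.card_sym_eq_choose]

theorem Fin.monotone_of_le_of_val_eq_succ {α : Type*} [Preorder α] {m : ℕ} {f : Fin m → α}
    (h : ∀ a b : Fin m, (b : ℕ) = a + 1 → f a ≤ f b) : Monotone f := by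
  cases m with
  | zero => exact fun a => a.elim0
  | succ m => exact Fin.monotone_iff_le_succ.2 fun i => h _ _ (by simp)

theorem Equiv.Perm.eq_of_strictMono_comp_eq {β : Type*} [LinearOrder β] {m : ℕ}
    {g g' : Fin m → β} (hg : StrictMono g) (hg' : StrictMono g') {π π' : Equiv.Perm (Fin m)}
    (h : g ∘ π = g' ∘ π') : π = π' := by
  have hrange : Set.range g = Set.range g' := by
    rw [← π.surjective.range_comp g, h, π'.surjective.range_comp]
  obtain rfl := (hg.range_inj hg').1 hrange
  exact Equiv.ext fun a => hg.injective (congrFun h a)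

-- The decidability instances are arguments so that the lemma rewrites with the caller's instances.
theorem card_filter_forall_not_eq_sum {α ι : Type*} [Fintype α] [Fintype ι] (P : ι → α → Prop)
    [DecidablePred fun a => ∀ i, ¬ P i a] [∀ t : Finset ι, DecidablePred fun a => ∀ i ∈ t, P i a] :
    (#{a | ∀ i, ¬ P i a} : ℤ) = ∑ t : Finset ι, (-1 : ℤ) ^ #t * #{a | ∀ i ∈ t, P i a} := by
  have hcompl :
      univ.inf (fun i => ({a | P i a} : Finset α)ᶜ) = ({a | ∀ i, ¬ P i a} : Finset α) := by
    ext; simp [mem_inf]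
  have hinf : ∀ t : Finset ι,
      t.inf (fun i => ({a | P i a} : Finset α)) = ({a | ∀ i ∈ t, P i a} : Finset α) :=
    fun t => by ext; simp [mem_inf]
  rw [← hcompl, inclusion_exclusion_card_inf_compl, powerset_univ]
  simp_rw [hinf]

def IsRise {α : Type*} [Preorder α] {n : ℕ} (σ : Equiv.Perm (Fin n)) (w : Fin n → α)
    (i : Fin (n - 1)) : Prop :=
  σ ⟨i, by omega⟩ < σ ⟨i + 1, by omega⟩ ∧ w ⟨i, by omega⟩ ≤ w ⟨i + 1, by omega⟩

theorem not_exists_rise_iff {n k : ℕ} (σ : Equiv.Perm (Fin n)) (w : Fin n → Fin k) :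
    (¬ ∃ p : Fin n × Fin n, (p.2 : ℕ) = p.1 + 1 ∧ σ p.1 < σ p.2 ∧ (w p.1 : ℕ) ≤ w p.2) ↔
      ∀ i, ¬ IsRise σ w i := by
  constructor
  · rintro h i ⟨hσ, hw⟩
    exact h ⟨(⟨i, by omega⟩, ⟨i + 1, by omega⟩), rfl, hσ, hw⟩
  · rintro h ⟨⟨x, y⟩, hxy, hσ, hw⟩
    dsimp only at hxy hσ hw
    rw [show y = ⟨x + 1, by omega⟩ from Fin.ext hxy] at hσ hw
    exact h ⟨x, by omega⟩ ⟨hσ, hw⟩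

namespace Composition

variable {n : ℕ} (c : Composition n)

-- `i ∈ c.cuts` when a block of `c` ends at the 0-indexed position `i`.
def cuts : Finset (Fin (n - 1)) :=
  compositionAsSetEquiv n c.toCompositionAsSet

theorem cuts_bijective : Function.Bijective (cuts (n := n)) :=
  ((compositionEquiv n).trans (compositionAsSetEquiv n)).bijective

theorem mem_cuts_iff_mem_boundaries {i : Fin (n - 1)} :
    i ∈ c.cuts ↔ (⟨i + 1, by omega⟩ : Fin (n + 1)) ∈ c.boundaries := by
  rw [cuts, compositionAsSetEquiv, Equiv.coe_fn_mk, Set.mem_toFinset]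
  simp [add_comm, toCompositionAsSet_boundaries]

theorem mem_cuts {i : Fin (n - 1)} : i ∈ c.cuts ↔ ∃ t, c.sizeUpTo t = i + 1 := by
  rw [mem_cuts_iff_mem_boundaries]
  simp only [boundaries, mem_map, mem_univ, true_and, boundary, Fin.ext_iff]
  constructor
  · exact fun ⟨t, ht⟩ => ⟨t, ht⟩
  · rintro ⟨t, ht⟩
    refine ⟨⟨t, ?_⟩, ht⟩
    by_contra! hlen
    have := c.sizeUpTo_ofLength_le t (by omega)
    omega

theorem card_cuts : #c.cuts = c.length - 1 := by
  rcases Nat.eq_zero_or_pos n with rfl | hn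
  · have := (card_le_univ c.cuts).trans_eq (Fintype.card_fin _)
    rw [(Composition.length_eq_zero c).2 rfl]
    omega
  let shift : Fin (n - 1) ↪ Fin (n + 1) :=
    ⟨fun i => ⟨i + 1, by omega⟩, fun i j h => Fin.ext (by simpa using congrArg Fin.val h)⟩
  have hshift : ∀ i, (shift i : ℕ) = i + 1 := fun _ => rfl
  have hmap : c.cuts.map shift = (c.boundaries.erase 0).erase (Fin.last n) := by
    ext b
    simp only [mem_map, mem_erase]
    constructor
    · rintro ⟨i, hi, rfl⟩
      refine ⟨Fin.ne_of_val_ne ?_, Fin.ne_of_val_ne ?_, (c.mem_cuts_iff_mem_boundaries).1 hi⟩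
      · rw [hshift, Fin.val_last]; omega
      · rw [hshift, Fin.val_zero]; omega
    · rintro ⟨hbn, hb0, hb⟩
      have hbn' : (b : ℕ) ≠ n := fun h => hbn (Fin.ext h)
      have hb0' : (b : ℕ) ≠ 0 := fun h => hb0 (Fin.ext h)
      have hb' : shift ⟨b - 1, by omega⟩ = b := Fin.ext (by rw [hshift, Fin.val_mk]; omega)
      refine ⟨⟨b - 1, by omega⟩, (c.mem_cuts_iff_mem_boundaries).2 ?_, hb'⟩
      rwa [← hb'] at hb
  have h0 : (0 : Fin (n + 1)) ∈ c.boundaries := c.toCompositionAsSet.zero_mem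
  have hlast : Fin.last n ∈ c.boundaries.erase 0 :=
    mem_erase.2 ⟨Fin.ne_of_val_ne (by simp; omega), c.toCompositionAsSet.getLast_mem⟩
  rw [← card_map shift, hmap, card_erase_of_mem hlast, card_erase_of_mem h0,
    card_boundaries_eq_succ_length]
  omega

theorem index_eq_index_succ_iff_notMem_cuts {i : Fin (n - 1)} :
    c.index ⟨i, by omega⟩ = c.index ⟨i + 1, by omega⟩ ↔ i ∉ c.cuts := by
  set j := c.index ⟨i + 1, by omega⟩
  have hj : c.sizeUpTo j ≤ i + 1 := c.sizeUpTo_index_le _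
  have hj' : i + 1 < c.sizeUpTo (j + 1) := c.lt_sizeUpTo_index_succ ⟨i + 1, by omega⟩
  rw [mem_cuts, not_exists]
  constructor
  · intro heq t ht
    have hi : c.sizeUpTo j ≤ i := heq ▸ c.sizeUpTo_index_le ⟨i, by omega⟩
    rcases le_or_gt t j with htj | htj
    · have := c.monotone_sizeUpTo htj
      omega
    · have := c.monotone_sizeUpTo (show (j : ℕ) + 1 ≤ t by omega)
      omega
  · intro hcut
    have hi : c.sizeUpTo j ≤ i := by have := hcut j; omega
    have hmem : (⟨i, by omega⟩ : Fin n) ∈ Set.range (c.embedding j) :=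
      c.mem_range_embedding_iff.2 ⟨hi, show (i : ℕ) < c.sizeUpTo (j + 1) by omega⟩
    exact (c.mem_range_embedding_iff'.1 hmem).symm

def MonotoneOnBlocks {α : Type*} [Preorder α] (f : Fin n → α) : Prop :=
  ∀ j, Monotone (f ∘ c.embedding j)

theorem monotoneOnBlocks_iff {α : Type*} [Preorder α] {f : Fin n → α} :
    c.MonotoneOnBlocks f ↔
      ∀ i : Fin (n - 1), i ∉ c.cuts → f ⟨i, by omega⟩ ≤ f ⟨i + 1, by omega⟩ := by
  constructor
  · intro hf i hi
    rw [← c.index_eq_index_succ_iff_notMem_cuts] at hi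
    obtain ⟨u, hu⟩ := c.mem_range_embedding_iff'.2 hi.symm
    obtain ⟨v, hv⟩ := c.mem_range_embedding ⟨i + 1, by omega⟩
    have huv : u ≤ v := by
      have hu' := congrArg Fin.val hu
      have hv' := congrArg Fin.val hv
      simp only [coe_embedding] at hu' hv'
      rw [Fin.le_def]
      omega
    have := hf _ huv
    rwa [Function.comp_apply, Function.comp_apply, hu, hv] at this
  · intro hf j
    refine Fin.monotone_of_le_of_val_eq_succ fun a b hab => ?_
    have hb : (c.embedding j b : ℕ) = c.embedding j a + 1 := by simp [hab]; omega
    have hi : (c.embedding j a : ℕ) < n - 1 := by have := (c.embedding j b).2; omega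
    have hx : (⟨c.embedding j a, by omega⟩ : Fin n) = c.embedding j a := rfl
    have hy : (⟨c.embedding j a + 1, by omega⟩ : Fin n) = c.embedding j b := Fin.ext hb.symm
    have := hf ⟨c.embedding j a, hi⟩ ((c.index_eq_index_succ_iff_notMem_cuts).1 (by
      simp only [hx, hy, index_embedding]))
    rwa [hx, hy] at this

theorem card_monotoneOnBlocks {α : Type*} [LinearOrder α] [Fintype α] :
    Fintype.card {f : Fin n → α // c.MonotoneOnBlocks f} =
      ∏ j, (Fintype.card α + c.blocksFun j - 1).choose (c.blocksFun j) := by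
  let restrict : (Fin n → α) ≃ ∀ j, Fin (c.blocksFun j) → α :=
    (Equiv.arrowCongr c.blocksFinEquiv.symm (Equiv.refl α)).trans (Equiv.piCurry fun _ _ => α)
  let e : {f : Fin n → α // c.MonotoneOnBlocks f} ≃
      ∀ j, {g : Fin (c.blocksFun j) → α // Monotone g} :=
    (restrict.subtypeEquiv fun _ => Iff.rfl).trans (Equiv.subtypePiEquivPi)
  rw [Fintype.card_congr e, Fintype.card_pi]
  exact prod_congr rfl fun j _ => card_monotone_fin_eq_choose _

def blockPerm (π : ∀ j, Equiv.Perm (Fin (c.blocksFun j))) : Equiv.Perm (Fin n) :=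
  c.blocksFinEquiv.permCongr (Equiv.sigmaCongrRight π)

theorem blockPerm_embedding (π : ∀ j, Equiv.Perm (Fin (c.blocksFun j))) (j : Fin c.length)
    (a : Fin (c.blocksFun j)) : c.blockPerm π (c.embedding j a) = c.embedding j (π j a) := by
  rw [blockPerm, Equiv.permCongr_apply]
  exact congrArg c.blocksFinEquiv (congrArg _ (c.blocksFinEquiv.symm_apply_apply ⟨j, a⟩))

theorem blockPerm_inv_embedding (π : ∀ j, Equiv.Perm (Fin (c.blocksFun j))) (j : Fin c.length)
    (a : Fin (c.blocksFun j)) :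
    (c.blockPerm π)⁻¹ (c.embedding j a) = c.embedding j ((π j)⁻¹ a) := by
  rw [Equiv.Perm.inv_eq_iff_eq, blockPerm_embedding]
  simp

theorem mul_blockPerm_bijective :
    Function.Bijective fun x : {σ : Equiv.Perm (Fin n) // c.MonotoneOnBlocks σ} ×
        (∀ j, Equiv.Perm (Fin (c.blocksFun j))) => x.1.1 * c.blockPerm x.2 := by
  have strictMono_of_monotoneOnBlocks {σ : Equiv.Perm (Fin n)} (hσ : c.MonotoneOnBlocks σ) j :
      StrictMono (σ ∘ c.embedding j) :=
    (hσ j).strictMono_of_injective (σ.injective.comp (c.embedding j).injective)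
  constructor
  · rintro ⟨⟨σ, hσ⟩, π⟩ ⟨⟨σ', hσ'⟩, π'⟩ h
    have hblock : ∀ j, (σ ∘ c.embedding j) ∘ π j = (σ' ∘ c.embedding j) ∘ π' j :=
      fun j => funext fun a => by
        simpa [blockPerm_embedding] using congrArg (fun τ => τ (c.embedding j a)) h
    obtain rfl : π = π' := funext fun j =>
      Equiv.Perm.eq_of_strictMono_comp_eq (strictMono_of_monotoneOnBlocks hσ j)
        (strictMono_of_monotoneOnBlocks hσ' j) (hblock j)
    obtain rfl : σ = σ' := mul_right_cancel h
    rfl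
  · intro τ
    let π : ∀ j, Equiv.Perm (Fin (c.blocksFun j)) := fun j => (Tuple.sort (τ ∘ c.embedding j))⁻¹
    have hσ : c.MonotoneOnBlocks (τ * (c.blockPerm π)⁻¹) := fun j => by
      have : ⇑(τ * (c.blockPerm π)⁻¹) ∘ c.embedding j =
          (τ ∘ c.embedding j) ∘ Tuple.sort (τ ∘ c.embedding j) :=
        funext fun a => by
          simp only [Equiv.Perm.coe_mul, Function.comp_apply, blockPerm_inv_embedding, π, inv_inv]
      rw [this]
      exact Tuple.monotone_sort _
    exact ⟨(⟨_, hσ⟩, π), inv_mul_cancel_right τ _⟩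

theorem card_monotoneOnBlocks_perm :
    Fintype.card {σ : Equiv.Perm (Fin n) // c.MonotoneOnBlocks σ} =
      Nat.multinomial univ c.blocksFun := by
  have hcard := Fintype.card_congr (Equiv.ofBijective _ c.mul_blockPerm_bijective)
  simp only [Fintype.card_prod, Fintype.card_pi, Fintype.card_perm, Fintype.card_fin] at hcard
  have hspec := Nat.multinomial_spec univ c.blocksFun
  rw [c.sum_blocksFun, ← hcard, mul_comm] at hspec
  exact (Nat.eq_of_mul_eq_mul_right (prod_pos fun j _ => Nat.factorial_pos _) hspec).symm

theorem forall_isRise_iff {α : Type*} [Preorder α] {σ : Equiv.Perm (Fin n)} {w : Fin n → α} :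
    (∀ i ∈ c.cutsᶜ, IsRise σ w i) ↔ c.MonotoneOnBlocks σ ∧ c.MonotoneOnBlocks w := by
  simp only [mem_compl, monotoneOnBlocks_iff, ← forall_and, IsRise]
  refine forall₂_congr fun i _ => and_congr_left' ?_
  exact (σ.injective.ne (Fin.ne_of_val_ne (by simp))).le_iff_lt.symm

theorem card_forall_isRise {α : Type*} [LinearOrder α] [Fintype α] :
    #{x : Equiv.Perm (Fin n) × (Fin n → α) | ∀ i ∈ c.cutsᶜ, IsRise x.1 x.2 i} =
      Nat.multinomial univ c.blocksFun *
        ∏ j, (Fintype.card α + c.blocksFun j - 1).choose (c.blocksFun j) := by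
  rw [filter_congr fun x _ => c.forall_isRise_iff, ← Fintype.card_subtype,
    Fintype.card_congr (Equiv.subtypeProdEquivProd (p := fun σ : Equiv.Perm (Fin n) =>
      c.MonotoneOnBlocks σ) (q := c.MonotoneOnBlocks)), Fintype.card_prod,
    card_monotoneOnBlocks_perm, card_monotoneOnBlocks]

theorem card_compl_cuts : #c.cutsᶜ = n - c.length := by
  have := c.length_pos_iff
  rw [card_compl, card_cuts, Fintype.card_fin]
  omega

end Composition

theorem statement19_general (k n : ℕ) :
    (((Finset.univ : Finset (Equiv.Perm (Fin n) × (Fin n → Fin k))).filter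
        (fun sw => ¬ ∃ p : Fin n × Fin n, (p.2 : ℕ) = (p.1 : ℕ) + 1 ∧
          sw.1 p.1 < sw.1 p.2 ∧ (sw.2 p.1 : ℕ) ≤ (sw.2 p.2 : ℕ))).card : ℤ)
      = ∑ c : Composition n, (-1 : ℤ) ^ (n - c.length) *
          (Nat.multinomial Finset.univ c.blocksFun : ℤ) *
          ∏ i : Fin c.length, ((c.blocksFun i + k - 1).choose (c.blocksFun i) : ℤ) := by
  rw [filter_congr fun x _ => not_exists_rise_iff x.1 x.2, card_filter_forall_not_eq_sum]
  have hbij : Function.Bijective fun c : Composition n => c.cutsᶜ :=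
    (compl_involutive.bijective).comp Composition.cuts_bijective
  refine (Fintype.sum_bijective _ hbij _ _ fun c => ?_).symm
  rw [c.card_compl_cuts, c.card_forall_isRise, Fintype.card_fin]
  push_cast
  simp_rw [add_comm k]
  ring

theorem statement19 (k n : ℕ) (hk : 2 ≤ k) (hn : 1 ≤ n) :
    (((Finset.univ : Finset (Equiv.Perm (Fin n) × (Fin n → Fin k))).filter
        (fun sw => ¬ ∃ p : Fin n × Fin n, (p.2 : ℕ) = (p.1 : ℕ) + 1 ∧
          sw.1 p.1 < sw.1 p.2 ∧ (sw.2 p.1 : ℕ) ≤ (sw.2 p.2 : ℕ))).card : ℤ)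
      = ∑ c : Composition n, (-1 : ℤ) ^ (n - c.length) *
          (Nat.multinomial Finset.univ c.blocksFun : ℤ) *
          ∏ i : Fin c.length, ((c.blocksFun i + k - 1).choose (c.blocksFun i) : ℤ) :=
  statement19_general k n
end
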